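/- arXiv:2212.09224 — 10 statements merged into one kernel-verified Lean document; each statement's English description precedes it below -/
import Mathlib

section
/- Let X be an L-space and Y its localic part. Then Y, with the topology whose open sets are exactly the sets V ∩ Y with V a clopen upper set of X, is a sober topological space: every irreducible closed subset of Y is the closure of a unique point of Y. -/
open Set Topology

/-- An L-space: a Priestley space (compact, Priestley separation) that is an
Esakia space (downward closure of clopens is clopen) and extremally
order-disconnected (closure of open upper sets is open). -/
structure IsLSpace (X : Type*) [TopologicalSpace X] [PartialOrder X] : Prop where
  compact : CompactSpace X
  priestley : ∀ x y : X, ¬ x ≤ y →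
    ∃ U : Set X, IsClopen U ∧ IsUpperSet U ∧ x ∈ U ∧ y ∉ U
  esakia : ∀ U : Set X, IsClopen U → IsClopen (lowerClosure U : Set X)
  eod : ∀ U : Set X, IsOpen U → IsUpperSet U → IsOpen (closure U)

/-- The localic part of an L-space: points whose down-set is clopen. -/
def localicPart (X : Type*) [TopologicalSpace X] [PartialOrder X] : Set X :=
  {y : X | IsClopen (Set.Iic y)}

/-- An L-morphism: a continuous order-preserving map such that
`f ⁻¹' (closure U) = closure (f ⁻¹' U)` for every open upper set `U`. -/
def IsLMorphism {X₁ X₂ : Type*} [TopologicalSpace X₁] [PartialOrder X₁]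
    [TopologicalSpace X₂] [PartialOrder X₂] (f : X₁ → X₂) : Prop :=
  Continuous f ∧ Monotone f ∧
    ∀ U : Set X₂, IsOpen U → IsUpperSet U → f ⁻¹' closure U = closure (f ⁻¹' U)

/-- `V ≪ U`: for every open upper set `W`, `U ⊆ closure W` implies `V ⊆ W`. -/
def WayBelowSet {X : Type*} [TopologicalSpace X] [PartialOrder X]
    (V U : Set X) : Prop :=
  ∀ W : Set X, IsOpen W → IsUpperSet W → U ⊆ closure W → V ⊆ W

/-- The kernel of a clopen upper set `U`: the union of all clopen upper sets
way below `U`. -/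
def kernelSet {X : Type*} [TopologicalSpace X] [PartialOrder X] (U : Set X) : Set X :=
  ⋃₀ {V : Set X | IsClopen V ∧ IsUpperSet V ∧ WayBelowSet V U}

/-- A CL-space: an L-space in which every clopen upper set `U` is packed,
i.e. `ker U` is dense in `U`. -/
def IsCLSpace (X : Type*) [TopologicalSpace X] [PartialOrder X] : Prop :=
  IsLSpace X ∧ ∀ U : Set X, IsClopen U → IsUpperSet U → U ⊆ closure (kernelSet U)

/-- A Scott upset: a closed upper set all of whose minimal elements lie in the
localic part. -/
def IsScottUpset {X : Type*} [TopologicalSpace X] [PartialOrder X] (F : Set X) : Prop :=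
  IsClosed F ∧ IsUpperSet F ∧
    ∀ x ∈ F, (∀ y ∈ F, y ≤ x → y = x) → x ∈ localicPart X

/-- A proper L-morphism: an L-morphism with `f ⁻¹' (ker U) ⊆ ker (f ⁻¹' U)`
for every clopen upper set `U`. -/
def IsProperLMorphism {X₁ X₂ : Type*} [TopologicalSpace X₁] [PartialOrder X₁]
    [TopologicalSpace X₂] [PartialOrder X₂] (f : X₁ → X₂) : Prop :=
  IsLMorphism f ∧ ∀ U : Set X₂, IsClopen U → IsUpperSet U →
    f ⁻¹' kernelSet U ⊆ kernelSet (f ⁻¹' U)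

/-- Kernel-stability: `ker U ∩ ker V = ker (U ∩ V)` for clopen upper sets. -/
def KernelStable (X : Type*) [TopologicalSpace X] [PartialOrder X] : Prop :=
  ∀ U V : Set X, IsClopen U → IsUpperSet U → IsClopen V → IsUpperSet V →
    kernelSet U ∩ kernelSet V = kernelSet (U ∩ V)

/-- Scott-stability: the intersection of two Scott upsets is a Scott upset. -/
def ScottStable (X : Type*) [TopologicalSpace X] [PartialOrder X] : Prop :=
  ∀ F G : Set X, IsScottUpset F → IsScottUpset G → IsScottUpset (F ∩ G)

/-- L-compactness: every minimal element of `X` lies in the localic part. -/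
def IsLCompact (X : Type*) [TopologicalSpace X] [PartialOrder X] : Prop :=
  ∀ x : X, (∀ y : X, y ≤ x → y = x) → x ∈ localicPart X

/-- The regular part of a clopen upper set `U`: the union of all clopen upper
sets `V` with `↓V ⊆ U`. -/
def regPart {X : Type*} [TopologicalSpace X] [PartialOrder X] (U : Set X) : Set X :=
  ⋃₀ {V : Set X | IsClopen V ∧ IsUpperSet V ∧ (lowerClosure V : Set X) ⊆ U}

/-- L-regularity: every clopen upper set `U` satisfies `U ⊆ closure (reg U)`. -/
def IsLRegular (X : Type*) [TopologicalSpace X] [PartialOrder X] : Prop :=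
  ∀ U : Set X, IsClopen U → IsUpperSet U → U ⊆ closure (regPart U)

/-- The localic part of an L-space, with the topology whose open sets are
exactly the traces of clopen upper sets, is sober: every irreducible closed
subset is the closure of a unique point. -/
theorem localicPart_sober {X : Type*} [TopologicalSpace X] [PartialOrder X]
    (hX : IsLSpace X)
    (tY : TopologicalSpace (localicPart X))
    (htY : ∀ U : Set (localicPart X), @IsOpen _ tY U ↔
      ∃ V : Set X, IsClopen V ∧ IsUpperSet V ∧
        U = ((↑) : localicPart X → X) ⁻¹' V) :
    ∀ S : Set (localicPart X), @IsIrreducible _ tY S → @IsClosed _ tY S →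
      ∃! y : localicPart X, @closure _ tY {y} = S := by
  classical
  haveI := hX.compact
  letI : TopologicalSpace (localicPart X) := tY
  intro S hSirr hScl
  let I := {U : Set X // IsClopen U ∧ IsUpperSet U}
  let inF : I → Prop := fun i => (S ∩ ((↑) : localicPart X → X) ⁻¹' i.1).Nonempty
  have hopen : ∀ i : I, IsOpen (((↑) : localicPart X → X) ⁻¹' i.1) := fun i =>
    (htY _).2 ⟨i.1, i.2.1, i.2.2, rfl⟩
  -- finite intersection property for members of the "filter" inF
  have hfip : ∀ u : Finset I, (∀ i ∈ u, inF i) →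
      (S ∩ ⋂ i ∈ u, ((↑) : localicPart X → X) ⁻¹' i.1).Nonempty := by
    intro u
    induction u using Finset.induction_on with
    | empty => intro _; simpa using hSirr.1
    | @insert a u ha ih =>
      intro h
      have h1 : inF a := h a (Finset.mem_insert_self _ _)
      have h2 := ih fun i hi => h i (Finset.mem_insert_of_mem hi)
      have hrest : IsOpen (⋂ i ∈ u, ((↑) : localicPart X → X) ⁻¹' i.1) :=
        isOpen_biInter_finset fun i _ => hopen i
      have := hSirr.2 _ _ (hopen a) hrest h1 h2
      simpa [Finset.set_biInter_insert] using this
  -- get a point in the "canonical" intersection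
  have hy : (⋂ i : I, (if inF i then i.1 else i.1ᶜ)).Nonempty := by
    by_contra hempty
    rw [Set.not_nonempty_iff_eq_empty] at hempty
    obtain ⟨u, hu⟩ := isCompact_univ.elim_finite_subfamily_closed
      (fun i : I => if inF i then i.1 else i.1ᶜ)
      (fun i => by
        show IsClosed (if inF i then i.1 else i.1ᶜ)
        by_cases h : inF i
        · rw [if_pos h]; exact i.2.1.isClosed
        · rw [if_neg h]; exact i.2.1.isOpen.isClosed_compl)
      (by rw [hempty]; simp)
    obtain ⟨x, hxS, hx⟩ := hfip (u.filter inF) fun i hi => (Finset.mem_filter.mp hi).2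
    have hxmem : (x : X) ∈ Set.univ ∩ ⋂ i ∈ u, (if inF i then i.1 else i.1ᶜ) := by
      refine ⟨trivial, ?_⟩
      rw [Set.mem_iInter₂]
      intro i hi
      by_cases h : inF i
      · rw [if_pos h]
        exact Set.mem_iInter₂.mp hx i (Finset.mem_filter.mpr ⟨hi, h⟩)
      · rw [if_neg h]
        intro hxi
        exact h ⟨x, hxS, hxi⟩
    rw [hu] at hxmem
    exact hxmem
  obtain ⟨y, hy⟩ := hy
  have hyF : ∀ i : I, inF i → y ∈ i.1 := by
    intro i h
    have := Set.mem_iInter.mp hy i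
    rwa [if_pos h] at this
  have hynF : ∀ i : I, ¬ inF i → y ∉ i.1 := by
    intro i h
    have := Set.mem_iInter.mp hy i
    rwa [if_neg h] at this
  -- Iic y is clopen
  let J := {i : I // y ∉ i.1}
  have hIic : Set.Iic y = (⋃ j : J, j.1.1)ᶜ := by
    rw [Set.compl_iUnion]
    ext z
    simp only [Set.mem_Iic, Set.mem_iInter, Set.mem_compl_iff]
    constructor
    · intro hz j hzj
      exact j.2 (j.1.2.2 hz hzj)
    · intro h
      by_contra hzy
      obtain ⟨U, hUc, hUu, hzU, hyU⟩ := hX.priestley z y hzy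
      exact h ⟨⟨U, hUc, hUu⟩, hyU⟩ hzU
  set W : Set X := ⋃ j : J, j.1.1 with hWdef
  have hWopen : IsOpen W := isOpen_iUnion fun j => j.1.2.1.isOpen
  have hWupper : IsUpperSet W := isUpperSet_iUnion fun j => j.1.2.2
  have hclW_open : IsOpen (closure W) := hX.eod W hWopen hWupper
  have hclW_clopen : IsClopen (closure W) := ⟨isClosed_closure, hclW_open⟩
  have hclW_upper : IsUpperSet (closure W) := by
    intro a b hab ha
    by_contra hb
    have hB : IsClopen ((closure W)ᶜ) := ⟨hclW_open.isClosed_compl, isClosed_closure.isOpen_compl⟩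
    have hdB := hX.esakia _ hB
    have haB : a ∈ (lowerClosure ((closure W)ᶜ) : Set X) := ⟨b, hb, hab⟩
    have hdisj : ∀ w, w ∈ (lowerClosure ((closure W)ᶜ) : Set X) → w ∉ W := by
      rintro w ⟨b', hb', hwb'⟩ hwW
      exact hb' (subset_closure (hWupper hwb' hwW))
    obtain ⟨z, hz1, hz2⟩ := mem_closure_iff.mp ha _ hdB.isOpen haB
    exact hdisj z hz1 hz2
  have hnF : ¬ inF ⟨closure W, hclW_clopen, hclW_upper⟩ := by
    rintro ⟨s, hsS, hs⟩
    have hIs : IsOpen (Set.Iic (s : X)) := s.2.isOpen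
    obtain ⟨z, hz1, hz2⟩ := mem_closure_iff.mp hs _ hIs (le_refl (s : X))
    obtain ⟨j, hzj⟩ := Set.mem_iUnion.mp hz2
    have hsj : (s : X) ∈ j.1.1 := j.1.2.2 hz1 hzj
    exact j.2 (hyF j.1 ⟨s, hsS, hsj⟩)
  have hynclW : y ∉ closure W := hynF _ hnF
  have hWclosed : IsClosed W := by
    have hcw : closure W = W :=
      Set.Subset.antisymm
        (Set.subset_iUnion (fun j : J => j.1.1)
          ⟨⟨closure W, hclW_clopen, hclW_upper⟩, hynclW⟩)
        subset_closure
    rw [← hcw]; exact isClosed_closure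
  have yY : y ∈ localicPart X := by
    show IsClopen (Set.Iic y)
    rw [hIic]
    exact ⟨hWopen.isClosed_compl, hWclosed.isOpen_compl⟩
  -- the candidate point
  have hSne : S.Nonempty := hSirr.1
  have hyS : (⟨y, yY⟩ : localicPart X) ∈ S := by
    by_contra h
    obtain ⟨V, hVc, hVu, hV⟩ := (htY Sᶜ).1 hScl.isOpen_compl
    have hyV : y ∈ V := by
      have : (⟨y, yY⟩ : localicPart X) ∈ Sᶜ := h
      rw [hV] at this
      exact this
    have hinF : inF ⟨V, hVc, hVu⟩ := by
      by_contra hn; exact hynF _ hn hyV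
    obtain ⟨s, hsS, hsV⟩ := hinF
    have : s ∈ Sᶜ := by rw [hV]; exact hsV
    exact this hsS
  have hSc : closure {(⟨y, yY⟩ : localicPart X)} = S := by
    apply Set.Subset.antisymm
    · exact closure_minimal (Set.singleton_subset_iff.mpr hyS) hScl
    · intro s hs
      rw [mem_closure_iff]
      intro o ho hso
      obtain ⟨V, hVc, hVu, rfl⟩ := (htY o).1 ho
      exact ⟨⟨y, yY⟩, hyF ⟨V, hVc, hVu⟩ ⟨s, hs, hso⟩, rfl⟩
  have key : ∀ a b : localicPart X, a ∈ closure ({b} : Set (localicPart X)) → (a : X) ≤ (b : X) := by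
    intro a b hab
    by_contra hle
    obtain ⟨U, hUc, hUu, haU, hbU⟩ := hX.priestley (a : X) (b : X) hle
    have ho : IsOpen (((↑) : localicPart X → X) ⁻¹' U) := (htY _).2 ⟨U, hUc, hUu, rfl⟩
    obtain ⟨c, hc1, hc2⟩ := mem_closure_iff.mp hab _ ho haU
    rw [Set.mem_singleton_iff] at hc2
    rw [hc2] at hc1
    exact hbU hc1
  refine ⟨⟨y, yY⟩, hSc, ?_⟩
  intro y' hy'
  have hy'S : y' ∈ S := by
    rw [← hy']; exact subset_closure rfl
  have l1 : (y' : X) ≤ y := key y' ⟨y, yY⟩ (by rw [hSc]; exact hy'S)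
  have l2 : (y : X) ≤ (y' : X) := key ⟨y, yY⟩ y' (by rw [hy']; exact hyS)
  exact Subtype.ext (le_antisymm l1 l2)
end

section
/- Let f : X₁ → X₂ be an L-morphism between L-spaces with localic parts Y₁ and Y₂. Then f(Y₁) ⊆ Y₂, and the restriction of f to a map Y₁ → Y₂ is continuous with respect to the localic-part topologies. -/
open Set Topology

/-- In an L-space, a point outside the closure of an upper set can be separated
from it by a clopen upper set. -/
lemma exists_clopen_upper_of_not_mem_closure {X : Type*} [TopologicalSpace X]
    [PartialOrder X] (hX : IsLSpace X) {S : Set X} (hS : IsUpperSet S) {x : X}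
    (hx : x ∉ closure S) :
    ∃ A : Set X, IsClopen A ∧ IsUpperSet A ∧ S ⊆ A ∧ x ∉ A := by
  haveI := hX.compact
  have hK : IsCompact (closure S) := isClosed_closure.isCompact
  -- separate each point of `closure S` from `x` by a clopen set
  have hsep : ∀ w : closure S, ∃ C : Set X, IsClopen C ∧ (w : X) ∈ C ∧ x ∉ C := by
    rintro ⟨w, hw⟩
    have hne : w ≠ x := fun h => hx (h ▸ hw)
    by_cases hwx : w ≤ x
    · have hxw : ¬ x ≤ w := fun h => hne (le_antisymm hwx h)
      obtain ⟨U, hU, hUu, hxU, hwU⟩ := hX.priestley x w hxw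
      exact ⟨Uᶜ, hU.compl, hwU, fun h => h hxU⟩
    · obtain ⟨U, hU, hUu, hwU, hxU⟩ := hX.priestley w x hwx
      exact ⟨U, hU, hwU, hxU⟩
  choose C hCclopen hCmem hCx using hsep
  obtain ⟨t, ht⟩ := hK.elim_finite_subcover C (fun i => (hCclopen i).2)
    (fun w hw => Set.mem_iUnion.2 ⟨⟨w, hw⟩, hCmem ⟨w, hw⟩⟩)
  set D : Set X := ⋃ i ∈ t, C i with hD
  have hDclopen : IsClopen D := Set.Finite.isClopen_biUnion t.finite_toSet
    (fun i _ => hCclopen i)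
  have hxD : x ∉ D := by
    intro hmem
    obtain ⟨i, _, hi⟩ := Set.mem_iUnion₂.1 hmem
    exact hCx i hi
  have hSD : closure S ⊆ D := ht
  -- the Esakia trick: shrink `D` to a clopen upper set containing `S`
  refine ⟨(↑(lowerClosure Dᶜ))ᶜ, (hX.esakia Dᶜ hDclopen.compl).compl,
    (lowerClosure Dᶜ).lower.compl, ?_, ?_⟩
  · intro s hs hmem
    obtain ⟨z, hz, hsz⟩ := hmem
    exact hz (hSD (subset_closure (hS hsz hs)))
  · intro h
    exact h (subset_lowerClosure hxD)

/-- In an L-space, the closure of an upper set is an upper set. -/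
lemma isUpperSet_closure_of_isUpperSet {X : Type*} [TopologicalSpace X]
    [PartialOrder X] (hX : IsLSpace X) {S : Set X} (hS : IsUpperSet S) :
    IsUpperSet (closure S) := by
  intro a b hab ha
  by_contra hb
  obtain ⟨A, hAclopen, hAupper, hSA, hbA⟩ :=
    exists_clopen_upper_of_not_mem_closure hX hS hb
  exact hbA (hAupper hab (closure_minimal hSA hAclopen.1 ha))

/-- In an L-space, principal down-sets are closed. -/
lemma isClosed_Iic_of_LSpace {X : Type*} [TopologicalSpace X]
    [PartialOrder X] (hX : IsLSpace X) (y : X) : IsClosed (Set.Iic y) := by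
  rw [← isOpen_compl_iff]
  rw [isOpen_iff_forall_mem_open]
  intro z hz
  obtain ⟨U, hU, hUu, hzU, hyU⟩ := hX.priestley z y hz
  exact ⟨U, fun w hw hwy => hyU (hUu hwy hw), hU.2, hzU⟩

/-- An L-morphism maps the localic part into the localic part, and its
restriction is continuous for the localic-part topologies. -/
theorem lMorphism_restricts_to_localicPart {X₁ X₂ : Type*}
    [TopologicalSpace X₁] [PartialOrder X₁] [TopologicalSpace X₂] [PartialOrder X₂]
    (hX₁ : IsLSpace X₁) (hX₂ : IsLSpace X₂)
    (f : X₁ → X₂) (hf : IsLMorphism f)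
    (tY₁ : TopologicalSpace (localicPart X₁)) (tY₂ : TopologicalSpace (localicPart X₂))
    (htY₁ : ∀ U : Set (localicPart X₁), @IsOpen _ tY₁ U ↔
      ∃ V : Set X₁, IsClopen V ∧ IsUpperSet V ∧ U = ((↑) : localicPart X₁ → X₁) ⁻¹' V)
    (htY₂ : ∀ U : Set (localicPart X₂), @IsOpen _ tY₂ U ↔
      ∃ V : Set X₂, IsClopen V ∧ IsUpperSet V ∧ U = ((↑) : localicPart X₂ → X₂) ⁻¹' V) :
    ∃ h : Set.MapsTo f (localicPart X₁) (localicPart X₂),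
      @Continuous _ _ tY₁ tY₂ (Set.MapsTo.restrict f _ _ h) := by
  have hmaps : Set.MapsTo f (localicPart X₁) (localicPart X₂) := by
    intro y hy
    have hy' : IsClopen (Set.Iic y) := hy
    set U : Set X₂ := (Set.Iic (f y))ᶜ with hUdef
    have hIicClosed : IsClosed (Set.Iic (f y)) := isClosed_Iic_of_LSpace hX₂ (f y)
    have hUopen : IsOpen U := hIicClosed.isOpen_compl
    have hUupper : IsUpperSet U := fun a b hab ha hb => ha (hab.trans hb)
    have key : f ⁻¹' closure U = closure (f ⁻¹' U) := hf.2.2 U hUopen hUupper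
    have hsub : f ⁻¹' U ⊆ (Set.Iic y)ᶜ := fun x hx hxy => hx (hf.2.1 hxy)
    have hclsub : closure (f ⁻¹' U) ⊆ (Set.Iic y)ᶜ :=
      closure_minimal hsub hy'.2.isClosed_compl
    have hfy : f y ∉ closure U := by
      intro hmem
      have : y ∈ closure (f ⁻¹' U) := key ▸ hmem
      exact hclsub this le_rfl
    have hclupper : IsUpperSet (closure U) :=
      isUpperSet_closure_of_isUpperSet hX₂ hUupper
    have hUclosed : IsClosed U := by
      apply isClosed_of_closure_subset
      intro z hz
      by_contra hzU
      have hzle : z ≤ f y := not_not.1 hzU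
      exact hfy (hclupper hzle hz)
    have : IsClopen (Set.Iic (f y)) := by
      constructor
      · exact hIicClosed
      · have := hUclosed.isOpen_compl
        rwa [hUdef, compl_compl] at this
    exact this
  refine ⟨hmaps, ?_⟩
  rw [continuous_def]
  intro s hs
  rw [htY₂] at hs
  obtain ⟨V, hV, hVu, rfl⟩ := hs
  rw [htY₁]
  exact ⟨f ⁻¹' V, hV.preimage hf.1, hVu.preimage hf.2.1, rfl⟩
end

section
/- Let X be an L-space with localic part Y. (1) For every open upper set U of X, cl U ∩ Y = U ∩ Y, where cl denotes closure in X. (2) For every open subset U of Y (that is, U = V ∩ Y for some clopen upper set V of X), cl U ∩ Y = U, where cl denotes closure in X. -/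
open Set Topology

/-- (1) `closure U ∩ Y = U ∩ Y` for every open upper set `U` of `X`;
(2) `closure U ∩ Y = U` for every open subset `U` of the localic part `Y`
(i.e. `U = V ∩ Y` with `V` a clopen upper set). Closures are taken in `X`. -/
theorem closure_inter_localicPart {X : Type*} [TopologicalSpace X] [PartialOrder X]
    (hX : IsLSpace X) :
    (∀ U : Set X, IsOpen U → IsUpperSet U →
        closure U ∩ localicPart X = U ∩ localicPart X) ∧
    (∀ V : Set X, IsClopen V → IsUpperSet V →
        closure (V ∩ localicPart X) ∩ localicPart X = V ∩ localicPart X) := by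
  constructor
  · intro U hUo hUu
    apply subset_antisymm
    · rintro x ⟨hxc, hxY⟩
      refine ⟨?_, hxY⟩
      by_contra hxU
      have hsub : U ⊆ (Set.Iic x)ᶜ := by
        intro u hu hule
        exact hxU (hUu hule hu)
      have : closure U ⊆ (Set.Iic x)ᶜ :=
        closure_minimal hsub hxY.compl.isClosed
      exact this hxc le_rfl
    · exact inter_subset_inter_left _ subset_closure
  · intro V hV hVu
    apply subset_antisymm
    · rintro x ⟨hxc, hxY⟩
      have : closure (V ∩ localicPart X) ⊆ V :=
        closure_minimal (inter_subset_left) hV.isClosed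
      exact ⟨this hxc, hxY⟩
    · exact subset_inter subset_closure inter_subset_right
end

section
/- Let X be an SL-space with localic part Y. For all open subsets U and V of Y (that is, sets of the form W ∩ Y with W a clopen upper set of X), cl U ∩ cl V = cl(U ∩ V), where cl denotes closure in X. -/
open Set Topology

/-- In an SL-space, for open subsets `U, V` of the localic part `Y`
(i.e. traces of clopen upper sets), `closure U ∩ closure V = closure (U ∩ V)`,
closures taken in `X`. -/
theorem closure_inter_closure_of_SLSpace {X : Type*} [TopologicalSpace X] [PartialOrder X]
    (hX : IsLSpace X) (hsp : Dense (localicPart X)) :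
    ∀ W₁ W₂ : Set X, IsClopen W₁ → IsUpperSet W₁ → IsClopen W₂ → IsUpperSet W₂ →
      closure (W₁ ∩ localicPart X) ∩ closure (W₂ ∩ localicPart X) =
        closure ((W₁ ∩ localicPart X) ∩ (W₂ ∩ localicPart X)) := by
  intro W₁ W₂ h₁ hu₁ h₂ hu₂
  have key : ∀ W : Set X, IsClopen W → closure (W ∩ localicPart X) = W := by
    intro W hW
    apply subset_antisymm
    · exact closure_minimal inter_subset_left hW.isClosed
    · have : W ∩ closure (localicPart X) ⊆ closure (W ∩ localicPart X) :=
        hW.isOpen.inter_closure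
      simpa [hsp.closure_eq] using this
  rw [key W₁ h₁, key W₂ h₂, Set.inter_inter_inter_comm, Set.inter_self,
    key (W₁ ∩ W₂) (h₁.inter h₂)]
end

section
/- Let X₁ and X₂ be SL-spaces with localic parts Y₁ and Y₂, and let g : Y₁ → Y₂ be a continuous map (with respect to the localic-part topologies). Then there exists an L-morphism f : X₁ → X₂ with f(y) = g(y) for every y ∈ Y₁. -/
open Set Topology

/-- Auxiliary: the candidate preimage of `U` under the extension of `g`. -/
def extMap {X₁ X₂ : Type*} [TopologicalSpace X₁] [PartialOrder X₁]
    [TopologicalSpace X₂] [PartialOrder X₂]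
    (g : localicPart X₁ → localicPart X₂) (U : Set X₂) : Set X₁ :=
  closure (((↑) : localicPart X₁ → X₁) '' (g ⁻¹' (((↑) : localicPart X₂ → X₂) ⁻¹' U)))

/-- Every continuous map between the localic parts of two SL-spaces extends to
an L-morphism between the SL-spaces. -/
theorem continuous_extends_to_lMorphism {X₁ X₂ : Type*}
    [TopologicalSpace X₁] [PartialOrder X₁] [TopologicalSpace X₂] [PartialOrder X₂]
    (hX₁ : IsLSpace X₁) (hX₂ : IsLSpace X₂)
    (hsp₁ : Dense (localicPart X₁)) (hsp₂ : Dense (localicPart X₂))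
    (tY₁ : TopologicalSpace (localicPart X₁)) (tY₂ : TopologicalSpace (localicPart X₂))
    (htY₁ : ∀ U : Set (localicPart X₁), @IsOpen _ tY₁ U ↔
      ∃ V : Set X₁, IsClopen V ∧ IsUpperSet V ∧ U = ((↑) : localicPart X₁ → X₁) ⁻¹' V)
    (htY₂ : ∀ U : Set (localicPart X₂), @IsOpen _ tY₂ U ↔
      ∃ V : Set X₂, IsClopen V ∧ IsUpperSet V ∧ U = ((↑) : localicPart X₂ → X₂) ⁻¹' V)
    (g : localicPart X₁ → localicPart X₂) (hg : @Continuous _ _ tY₁ tY₂ g) :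
    ∃ f : X₁ → X₂, IsLMorphism f ∧ ∀ y : localicPart X₁, f ↑y = ↑(g y) := by
  
  classical
  haveI : CompactSpace X₂ := hX₂.compact
  -- clopen sets in X₁ are the closures of their traces on the localic part
  have trace₁ : ∀ V : Set X₁, IsClopen V →
      V = closure (((↑) : localicPart X₁ → X₁) '' (((↑) : localicPart X₁ → X₁) ⁻¹' V)) := by
    intro V hV
    rw [Subtype.image_preimage_coe]
    refine subset_antisymm ?_ (closure_minimal inter_subset_right hV.isClosed)
    intro v hv
    have := hsp₁.open_subset_closure_inter hV.isOpen hv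
    rwa [inter_comm] at this
  have traceEq : ∀ V W : Set X₁, IsClopen V → IsClopen W →
      ((((↑) : localicPart X₁ → X₁) ⁻¹' V) = ((↑) : localicPart X₁ → X₁) ⁻¹' W) → V = W := by
    intro V W hV hW h
    rw [trace₁ V hV, trace₁ W hW, h]
  -- basic spec of extMap
  have hmap_spec : ∀ U : Set X₂, IsClopen U → IsUpperSet U →
      (IsClopen (extMap g U) ∧ IsUpperSet (extMap g U)) ∧
      ((↑) : localicPart X₁ → X₁) ⁻¹' (extMap g U)
        = g ⁻¹' (((↑) : localicPart X₂ → X₂) ⁻¹' U) := by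
    intro U hU hUu
    have hopen2 : @IsOpen _ tY₂ (((↑) : localicPart X₂ → X₂) ⁻¹' U) :=
      (htY₂ _).2 ⟨U, hU, hUu, rfl⟩
    have hopen1 : @IsOpen _ tY₁ (g ⁻¹' (((↑) : localicPart X₂ → X₂) ⁻¹' U)) :=
      hg.isOpen_preimage _ hopen2
    obtain ⟨V, hV, hVu, hVe⟩ := (htY₁ _).1 hopen1
    have heq : extMap g U = V := by
      show closure _ = V
      rw [hVe]
      exact (trace₁ V hV).symm
    rw [heq]
    exact ⟨⟨hV, hVu⟩, hVe.symm⟩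
  have hmap_mono : ∀ U U' : Set X₂, U ⊆ U' → extMap g U ⊆ extMap g U' :=
    fun U U' h => closure_mono (image_mono (preimage_mono (preimage_mono h)))
  have hmap_empty : extMap g (∅ : Set X₂) = ∅ := by
    simp [extMap]
  have hmap_univ : extMap g (univ : Set X₂) = univ := by
    obtain ⟨⟨c, u⟩, t⟩ := hmap_spec univ isClopen_univ isUpperSet_univ
    refine traceEq _ _ c isClopen_univ ?_
    simp only [preimage_univ] at t ⊢
    simpa using t
  have hmap_inter : ∀ U U' : Set X₂, IsClopen U → IsUpperSet U → IsClopen U' → IsUpperSet U' →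
      extMap g (U ∩ U') = extMap g U ∩ extMap g U' := by
    intro U U' h1 h2 h3 h4
    obtain ⟨⟨c1, u1⟩, t1⟩ := hmap_spec U h1 h2
    obtain ⟨⟨c2, u2⟩, t2⟩ := hmap_spec U' h3 h4
    obtain ⟨⟨c3, u3⟩, t3⟩ := hmap_spec (U ∩ U') (h1.inter h3) (h2.inter h4)
    refine traceEq _ _ c3 (c1.inter c2) ?_
    rw [t3, preimage_inter, preimage_inter, preimage_inter, t1, t2]
  have hmap_union : ∀ U U' : Set X₂, IsClopen U → IsUpperSet U → IsClopen U' → IsUpperSet U' →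
      extMap g (U ∪ U') = extMap g U ∪ extMap g U' := by
    intro U U' h1 h2 h3 h4
    obtain ⟨⟨c1, u1⟩, t1⟩ := hmap_spec U h1 h2
    obtain ⟨⟨c2, u2⟩, t2⟩ := hmap_spec U' h3 h4
    obtain ⟨⟨c3, u3⟩, t3⟩ := hmap_spec (U ∪ U') (h1.union h3) (h2.union h4)
    refine traceEq _ _ c3 (c1.union c2) ?_
    rw [t3, preimage_union, preimage_union, preimage_union, t1, t2]
  -- finite intersections / unions
  have biInter_spec : ∀ t : Finset {p : Set X₂ // IsClopen p ∧ IsUpperSet p},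
      IsClopen (⋂ i ∈ t, i.1) ∧ IsUpperSet (⋂ i ∈ t, i.1) ∧
        extMap g (⋂ i ∈ t, i.1) = ⋂ i ∈ t, extMap g i.1 := by
    intro t
    induction t using Finset.induction_on with
    | empty => simpa using ⟨isClopen_univ, isUpperSet_univ, hmap_univ⟩
    | @insert a s ha ih =>
      rw [Finset.set_biInter_insert, Finset.set_biInter_insert]
      exact ⟨a.2.1.inter ih.1, a.2.2.inter ih.2.1,
        by rw [hmap_inter _ _ a.2.1 a.2.2 ih.1 ih.2.1, ih.2.2]⟩
  have biUnion_spec : ∀ t : Finset {p : Set X₂ // IsClopen p ∧ IsUpperSet p},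
      IsClopen (⋃ i ∈ t, i.1) ∧ IsUpperSet (⋃ i ∈ t, i.1) ∧
        extMap g (⋃ i ∈ t, i.1) = ⋃ i ∈ t, extMap g i.1 := by
    intro t
    induction t using Finset.induction_on with
    | empty => simpa using ⟨isClopen_empty, isUpperSet_empty, hmap_empty⟩
    | @insert a s ha ih =>
      rw [Finset.set_biUnion_insert, Finset.set_biUnion_insert]
      exact ⟨a.2.1.union ih.1, a.2.2.union ih.2.1,
        by rw [hmap_union _ _ a.2.1 a.2.2 ih.1 ih.2.1, ih.2.2]⟩
  -- the key compactness argument defining f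
  have key : ∀ x : X₁, (⋂ i : {p : Set X₂ // IsClopen p ∧ IsUpperSet p},
      (if x ∈ extMap g i.1 then i.1 else i.1ᶜ)).Nonempty := by
    intro x
    by_contra hne
    rw [not_nonempty_iff_eq_empty] at hne
    have hclosed : ∀ i : {p : Set X₂ // IsClopen p ∧ IsUpperSet p},
        IsClosed (if x ∈ extMap g i.1 then i.1 else i.1ᶜ) := by
      intro i
      split
      · exact i.2.1.isClosed
      · exact i.2.1.isOpen.isClosed_compl
    obtain ⟨t, ht⟩ := IsCompact.elim_finite_subfamily_closed isCompact_univ _ hclosed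
      (by rw [univ_inter, hne])
    rw [univ_inter] at ht
    set P := t.filter (fun i => x ∈ extMap g i.1) with hP
    set N := t.filter (fun i => x ∉ extMap g i.1) with hN
    have hsub : (⋂ i ∈ P, i.1) ⊆ ⋃ i ∈ N, i.1 := by
      intro z hz
      by_contra hzn
      have hmem : z ∈ ⋂ i ∈ t, (if x ∈ extMap g i.1 then i.1 else i.1ᶜ) := by
        refine mem_iInter₂.2 fun i hi => ?_
        by_cases hx : x ∈ extMap g i.1
        · rw [if_pos hx]
          exact mem_iInter₂.1 hz i (Finset.mem_filter.2 ⟨hi, hx⟩)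
        · rw [if_neg hx]
          intro hzi
          exact hzn (mem_iUnion₂.2 ⟨i, Finset.mem_filter.2 ⟨hi, hx⟩, hzi⟩)
      rw [ht] at hmem
      exact hmem
    have hxP : x ∈ extMap g (⋂ i ∈ P, i.1) := by
      rw [(biInter_spec P).2.2]
      exact mem_iInter₂.2 fun i hi => (Finset.mem_filter.1 hi).2
    have hxN := hmap_mono _ _ hsub hxP
    rw [(biUnion_spec N).2.2] at hxN
    obtain ⟨i, hi, hxi⟩ := mem_iUnion₂.1 hxN
    exact (Finset.mem_filter.1 hi).2 hxi
  set f : X₁ → X₂ := fun x => (key x).choose with hfdef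
  have mem_iff : ∀ (x : X₁) (U : Set X₂), IsClopen U → IsUpperSet U →
      (f x ∈ U ↔ x ∈ extMap g U) := by
    intro x U hU hUu
    have hs := (key x).choose_spec
    rw [mem_iInter] at hs
    have h2 : f x ∈ (if x ∈ extMap g U then U else Uᶜ) := hs ⟨U, hU, hUu⟩
    split_ifs at h2 with hx
    · exact ⟨fun _ => hx, fun _ => h2⟩
    · exact ⟨fun h => absurd h h2, fun h => absurd h hx⟩
  have fpre : ∀ U : Set X₂, IsClopen U → IsUpperSet U → f ⁻¹' U = extMap g U := by
    intro U hU hUu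
    ext x
    exact mem_iff x U hU hUu
  -- continuity
  have hcont : Continuous f := by
    rw [continuous_def]
    intro O hO
    rw [isOpen_iff_forall_mem_open]
    intro x hx
    have hFc : IsCompact Oᶜ := hO.isClosed_compl.isCompact
    have hsep : ∀ q : ↥(Oᶜ), ∃ C : Set X₂,
        IsClopen C ∧ f x ∈ C ∧ (q : X₂) ∉ C ∧ IsOpen (f ⁻¹' C) := by
      rintro ⟨q, hq⟩
      by_cases h1 : f x ≤ q
      · have h2 : ¬ q ≤ f x := by
          intro h
          exact hq (le_antisymm h1 h ▸ hx)
        obtain ⟨W, hW, hWu, hqW, hfW⟩ := hX₂.priestley q (f x) h2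
        refine ⟨Wᶜ, hW.compl, hfW, fun h => h hqW, ?_⟩
        rw [preimage_compl, fpre W hW hWu]
        exact (hmap_spec W hW hWu).1.1.compl.isOpen
      · obtain ⟨W, hW, hWu, hfW, hqW⟩ := hX₂.priestley (f x) q h1
        refine ⟨W, hW, hfW, hqW, ?_⟩
        rw [fpre W hW hWu]
        exact (hmap_spec W hW hWu).1.1.isOpen
    choose C hC hfC hqC hoC using hsep
    have hcov : Oᶜ ⊆ ⋃ q : ↥(Oᶜ), (C q)ᶜ := by
      intro z hz
      exact mem_iUnion.2 ⟨⟨z, hz⟩, hqC ⟨z, hz⟩⟩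
    obtain ⟨t, ht⟩ := hFc.elim_finite_subcover _ (fun q => (hC q).compl.isOpen) hcov
    refine ⟨f ⁻¹' (⋂ q ∈ t, C q), ?_, ?_, ?_⟩
    · intro z hz
      rw [mem_preimage] at hz ⊢
      by_contra hzO
      obtain ⟨q, hqt, hzq⟩ := mem_iUnion₂.1 (ht hzO)
      exact hzq (mem_iInter₂.1 hz q hqt)
    · have : f ⁻¹' (⋂ q ∈ t, C q) = ⋂ q ∈ t, f ⁻¹' (C q) := by
        simp [preimage_iInter]
      rw [this]
      exact isOpen_biInter_finset fun q _ => hoC q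
    · rw [mem_preimage]
      exact mem_iInter₂.2 fun q _ => hfC q
  -- monotone
  have hmono : Monotone f := by
    intro a b hab
    by_contra hfb
    obtain ⟨U, hU, hUu, haU, hbU⟩ := hX₂.priestley (f a) (f b) hfb
    have ha : a ∈ extMap g U := (mem_iff a U hU hUu).1 haU
    have hb : b ∈ extMap g U := (hmap_spec U hU hUu).1.2 hab ha
    exact hbU ((mem_iff b U hU hUu).2 hb)
  -- extension property
  have pt_eq : ∀ p q : X₂,
      (∀ U : Set X₂, IsClopen U → IsUpperSet U → (p ∈ U ↔ q ∈ U)) → p = q := by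
    intro p q h
    refine le_antisymm ?_ ?_
    · by_contra hle
      obtain ⟨U, hU, hUu, hp, hq⟩ := hX₂.priestley p q hle
      exact hq ((h U hU hUu).1 hp)
    · by_contra hle
      obtain ⟨U, hU, hUu, hq, hp⟩ := hX₂.priestley q p hle
      exact hp ((h U hU hUu).2 hq)
  have hext : ∀ y : localicPart X₁, f ↑y = ↑(g y) := by
    intro y
    refine pt_eq _ _ fun U hU hUu => ?_
    rw [mem_iff _ U hU hUu]
    have t := (hmap_spec U hU hUu).2
    constructor
    · intro h
      have hy : y ∈ ((↑) : localicPart X₁ → X₁) ⁻¹' extMap g U := h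
      rw [t] at hy
      exact hy
    · intro h
      have hy : y ∈ g ⁻¹' (((↑) : localicPart X₂ → X₂) ⁻¹' U) := h
      rw [← t] at hy
      exact hy
  -- closures of open upper sets are upper
  have clos_upper : ∀ U : Set X₂, IsOpen U → IsUpperSet U → IsUpperSet (closure U) := by
    intro U hU hUu a b hab ha
    by_contra hb
    have hsepz : ∀ z : ↥(closure U), ∃ D : Set X₂, IsClopen D ∧ (z : X₂) ∈ D ∧ b ∉ D := by
      rintro ⟨z, hz⟩
      by_cases h1 : z ≤ b
      · have h2 : ¬ b ≤ z := by
          intro h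
          exact hb (le_antisymm h h1 ▸ hz)
        obtain ⟨W, hW, hWu, hbW, hzW⟩ := hX₂.priestley b z h2
        exact ⟨Wᶜ, hW.compl, hzW, fun h => h hbW⟩
      · obtain ⟨W, hW, hWu, hzW, hbW⟩ := hX₂.priestley z b h1
        exact ⟨W, hW, hzW, hbW⟩
    choose D hD hzD hbD using hsepz
    have hcov : closure U ⊆ ⋃ z : ↥(closure U), D z := fun z hz =>
      mem_iUnion.2 ⟨⟨z, hz⟩, hzD ⟨z, hz⟩⟩
    obtain ⟨t, ht⟩ := isClosed_closure.isCompact.elim_finite_subcover _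
      (fun z => (hD z).isOpen) hcov
    set C : Set X₂ := (⋃ z ∈ t, D z)ᶜ with hCdef
    have hCclopen : IsClopen C := (isClopen_biUnion_finset fun z _ => hD z).compl
    have hbC : b ∈ C := by
      intro hmem
      obtain ⟨z, hzt, hbz⟩ := mem_iUnion₂.1 hmem
      exact hbD z hbz
    have hCU : ∀ w, w ∈ C → w ∉ closure U := by
      intro w hwC hwU
      exact hwC (ht hwU)
    have hdown : IsClopen (lowerClosure C : Set X₂) := hX₂.esakia C hCclopen
    have haC : a ∈ (lowerClosure C : Set X₂) := mem_lowerClosure.2 ⟨b, hbC, hab⟩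
    rw [mem_closure_iff] at ha
    obtain ⟨w, hw1, hw2⟩ := ha _ hdown.isOpen haC
    obtain ⟨c, hcC, hwc⟩ := mem_lowerClosure.1 hw1
    exact hCU c hcC (subset_closure (hUu hwc hw2))
  refine ⟨f, ⟨hcont, hmono, ?_⟩, hext⟩
  intro U hUo hUu
  have hclU : IsClopen (closure U) := ⟨isClosed_closure, hX₂.eod U hUo hUu⟩
  have hclUu : IsUpperSet (closure U) := clos_upper U hUo hUu
  refine subset_antisymm ?_ (hcont.closure_preimage_subset U)
  rw [fpre _ hclU hclUu, trace₁ _ (hmap_spec _ hclU hclUu).1.1]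
  apply closure_mono
  rintro w ⟨y, hy, rfl⟩
  have hfy : f ↑y ∈ closure U := (mem_iff _ _ hclU hclUu).2 hy
  rw [hext y] at hfy
  have hloc : IsClopen (Iic ((g y : X₂))) := (g y).2
  rw [mem_closure_iff] at hfy
  obtain ⟨u, hu1, hu2⟩ := hfy _ hloc.isOpen (mem_Iic.2 le_rfl)
  show (↑y : X₁) ∈ f ⁻¹' U
  rw [mem_preimage, hext y]
  exact hUu hu1 hu2
end

section
/- Let X be an L-space and U, V clopen upper sets of X. (1) V ⊆ ker U if and only if V ≪ U. (2) For every open upper set W of X, if U ⊆ cl W then ker U ⊆ W. -/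
open Set Topology

/-- For clopen upper sets `U, V` of an L-space:
(1) `V ⊆ ker U` iff `V ≪ U`;
(2) for every open upper set `W`, `U ⊆ closure W` implies `ker U ⊆ W`. -/
theorem kernelSet_basic {X : Type*} [TopologicalSpace X] [PartialOrder X]
    (hX : IsLSpace X)
    (U V : Set X) (hU : IsClopen U) (hUup : IsUpperSet U)
    (hV : IsClopen V) (hVup : IsUpperSet V) :
    (V ⊆ kernelSet U ↔ WayBelowSet V U) ∧
    (∀ W : Set X, IsOpen W → IsUpperSet W → U ⊆ closure W → kernelSet U ⊆ W) := by
  constructor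
  · constructor
    · intro h W hWo hWu hUW x hxV
      obtain ⟨V', ⟨hV'c, hV'u, hV'wb⟩, hxV'⟩ := h hxV
      exact hV'wb W hWo hWu hUW hxV'
    · intro h
      exact subset_sUnion_of_mem ⟨hV, hVup, h⟩
  · intro W hWo hWu hUW x hx
    obtain ⟨V', ⟨hV'c, hV'u, hV'wb⟩, hxV'⟩ := hx
    exact hV'wb W hWo hWu hUW hxV'
end

section
/- Let X be an SL-space with localic part Y, and let U, V be clopen upper sets of X. Then V ≪ U if and only if V ⊆ ↑(U ∩ Y), where ↑S denotes the upward closure of S. -/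
open Set Topology

/-- In an SL-space, for clopen upper sets `U, V`:
`V ≪ U` iff `V ⊆ ↑(U ∩ Y)`, where `Y` is the localic part. -/
theorem wayBelow_iff_subset_upperClosure {X : Type*} [TopologicalSpace X] [PartialOrder X]
    (hX : IsLSpace X) (hsp : Dense (localicPart X))
    (U V : Set X) (hU : IsClopen U) (hUup : IsUpperSet U)
    (hV : IsClopen V) (hVup : IsUpperSet V) :
    WayBelowSet V U ↔ V ⊆ (upperClosure (U ∩ localicPart X) : Set X) := by
  constructor
  · intro h x hxV
    by_contra hx
    have hIic : IsClosed (Set.Iic x) := by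
      rw [← isOpen_compl_iff, isOpen_iff_forall_mem_open]
      intro z hz
      obtain ⟨U', hU'clopen, hU'up, hzU', hxU'⟩ := hX.priestley z x hz
      refine ⟨U', ?_, hU'clopen.isOpen, hzU'⟩
      intro w hw hwle
      exact hxU' (hU'up hwle hw)
    have hWup : IsUpperSet ((Set.Iic x)ᶜ) := (isLowerSet_Iic x).compl
    have hUcl : U ⊆ closure ((Set.Iic x)ᶜ) := by
      intro u hu
      rw [mem_closure_iff]
      by_contra hnc
      push_neg at hnc
      obtain ⟨N, hNopen, huN, hNempty⟩ := hnc
      have hNsub : N ⊆ Set.Iic x := by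
        intro n hn
        by_contra hn'
        have : n ∈ N ∩ (Set.Iic x)ᶜ := ⟨hn, hn'⟩
        rw [hNempty] at this
        exact this
      obtain ⟨y, hyY, hyN, hyU⟩ :=
        hsp.exists_mem_open (hNopen.inter hU.isOpen) ⟨u, huN, hu⟩
      exact hx (⟨y, ⟨hyU, hyY⟩, hNsub hyN⟩)
    exact h _ hIic.isOpen_compl hWup hUcl hxV (Set.mem_Iic.mpr le_rfl)
  · intro h W hWopen hWup hUW x hxV
    obtain ⟨y, ⟨hyU, hyY⟩, hyx⟩ := h hxV
    have hyW : y ∈ W := by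
      have := hUW hyU
      rw [mem_closure_iff] at this
      obtain ⟨w, hw1, hw2⟩ := this _ hyY.isOpen (Set.mem_Iic.mpr le_rfl)
      exact hWup hw1 hw2
    exact hWup hyx hyW
end

section
/- Let X be an SL-space with localic part Y. Then X is a CL-space if and only if Y is locally compact, i.e. for every open subset V of Y and every y ∈ V there exist an open subset W of Y and a compact subset K of Y with y ∈ W ⊆ K ⊆ V. -/
open Set Topology

section AuxLemmas

variable {X : Type*} [TopologicalSpace X] [PartialOrder X]

namespace IsLSpace

/-- Way-below implies containment. -/
lemma wb_subset {A B : Set X} (h : WayBelowSet A B) (hBo : IsOpen B)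
    (hBu : IsUpperSet B) : A ⊆ B :=
  h B hBo hBu subset_closure

lemma wb_mono_right {A B B' : Set X} (h : WayBelowSet A B) (hBB' : B ⊆ B') :
    WayBelowSet A B' := fun T hTo hTu hsub => h T hTo hTu (hBB'.trans hsub)

lemma isOpen_kernelSet (U : Set X) : IsOpen (kernelSet U) :=
  isOpen_sUnion fun _ hV => hV.1.isOpen

lemma isUpperSet_kernelSet (U : Set X) : IsUpperSet (kernelSet U) := by
  rintro a b hab ⟨V, hV, haV⟩
  exact ⟨V, hV, hV.2.1 hab haV⟩

/-- A clopen set containing `x` inside any open neighborhood. -/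
lemma clopen_basis (hX : IsLSpace X) {x : X} {O : Set X} (hO : IsOpen O) (hx : x ∈ O) :
    ∃ C, IsClopen C ∧ x ∈ C ∧ C ⊆ O := by
  haveI := hX.compact
  have key : ∀ z ∈ Oᶜ, ∃ D : Set X, IsClopen D ∧ z ∈ D ∧ x ∉ D := by
    intro z hz
    have hxz : x ≠ z := fun h => hz (h ▸ hx)
    by_cases h : x ≤ z
    · have h' : ¬ z ≤ x := fun h2 => hxz (le_antisymm h h2)
      obtain ⟨U, hU, -, hzU, hxU⟩ := hX.priestley z x h'
      exact ⟨U, hU, hzU, hxU⟩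
    · obtain ⟨U, hU, -, hxU, hzU⟩ := hX.priestley x z h
      exact ⟨Uᶜ, hU.compl, hzU, fun hc => hc hxU⟩
  choose D hD hzD hxD using key
  have hcpt : IsCompact Oᶜ := hO.isClosed_compl.isCompact
  obtain ⟨t, ht⟩ := hcpt.elim_finite_subcover (fun z : ↥(Oᶜ) => D z z.2)
    (fun z => (hD z z.2).isOpen) (fun z hz => mem_iUnion.mpr ⟨⟨z, hz⟩, hzD z hz⟩)
  refine ⟨(⋃ z ∈ t, D z z.2)ᶜ, (Set.Finite.isClopen_biUnion t.finite_toSet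
    (fun z _ => hD z z.2)).compl, ?_, ?_⟩
  · simp only [mem_compl_iff, mem_iUnion]
    rintro ⟨z, -, hz⟩
    exact hxD z z.2 hz
  · intro w hw
    by_contra hwO
    exact hw (ht hwO)

lemma clopen_basis_sub (hX : IsLSpace X) {x : X} {O : Set X} (hO : IsOpen O) (hx : x ∈ O) :
    ∃ C, IsClopen C ∧ x ∈ C ∧ C ⊆ O := hX.clopen_basis hO hx

lemma isClosed_Iic (hX : IsLSpace X) (x : X) : IsClosed (Set.Iic x) := by
  rw [← isOpen_compl_iff]
  refine isOpen_iff_forall_mem_open.mpr fun z hz => ?_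
  obtain ⟨U, hU, hUu, hzU, hxU⟩ := hX.priestley z x hz
  exact ⟨U, fun w hw (hwx : w ≤ x) => hxU (hUu hwx hw), hU.isOpen, hzU⟩

lemma isClosed_Ici (hX : IsLSpace X) (x : X) : IsClosed (Set.Ici x) := by
  rw [← isOpen_compl_iff]
  refine isOpen_iff_forall_mem_open.mpr fun z hz => ?_
  obtain ⟨U, hU, hUu, hxU, hzU⟩ := hX.priestley x z hz
  exact ⟨Uᶜ, fun w (hw : w ∉ U) (hwx : x ≤ w) => hw (hUu hwx hxU), hU.compl.isOpen, hzU⟩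

/-- Closure of an upper set is upper (uses Esakia + clopen basis). -/
lemma isUpperSet_closure (hX : IsLSpace X) {T : Set X} (hT : IsUpperSet T) :
    IsUpperSet (closure T) := by
  intro a b hab ha
  by_contra hb
  obtain ⟨C, hC, hbC, hCsub⟩ := hX.clopen_basis isClosed_closure.isOpen_compl hb
  have hdown := hX.esakia C hC
  have hadown : a ∈ (lowerClosure C : Set X) := ⟨b, hbC, hab⟩
  obtain ⟨w, hw1, hw2⟩ := mem_closure_iff.mp ha _ hdown.isOpen hadown
  obtain ⟨c, hc, hwc⟩ := hw1
  exact hCsub hc (subset_closure (hT hwc hw2))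

/-- A localic point in the closure of an upper set is in the set. -/
lemma localic_mem (hX : IsLSpace X) {y : X} (hy : y ∈ localicPart X) {T : Set X}
    (hT : IsUpperSet T) (h : y ∈ closure T) : y ∈ T := by
  obtain ⟨t, ht1, ht2⟩ := mem_closure_iff.mp h _ hy.isOpen (mem_Iic.mpr le_rfl)
  exact hT ht1 ht2

/-- Separating a compact set from a point below none of its points. -/
lemma sep (hX : IsLSpace X) {C : Set X} {z : X} (hC : IsCompact C)
    (h : ∀ c ∈ C, ¬ c ≤ z) :
    ∃ A : Set X, IsClopen A ∧ IsUpperSet A ∧ C ⊆ A ∧ z ∉ A := by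
  choose B hB hBu hcB hzB using fun (c : ↥C) => hX.priestley c z (h c c.2)
  obtain ⟨t, ht⟩ := hC.elim_finite_subcover (fun c : ↥C => B c)
    (fun c => (hB c).isOpen) (fun c hc => mem_iUnion.mpr ⟨⟨c, hc⟩, hcB ⟨c, hc⟩⟩)
  refine ⟨⋃ c ∈ t, B c, Set.Finite.isClopen_biUnion t.finite_toSet (fun c _ => hB c),
    isUpperSet_iUnion₂ (fun c _ => hBu c), ht, ?_⟩
  simp only [mem_iUnion]
  rintro ⟨c, -, hc⟩
  exact hzB c hc

/-- `Ici x` is the intersection of clopen upper sets containing `x`. -/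
lemma Ici_eq (hX : IsLSpace X) (x : X) :
    Set.Ici x = ⋂ A : {A : Set X // IsClopen A ∧ IsUpperSet A ∧ x ∈ A}, A.1 := by
  apply subset_antisymm
  · intro z hz
    exact mem_iInter.mpr fun A => A.2.2.1 hz A.2.2.2
  · intro z hz
    by_contra hxz
    obtain ⟨U, hU, hUu, hxU, hzU⟩ := hX.priestley x z hxz
    exact hzU (mem_iInter.mp hz ⟨U, hU, hUu, hxU⟩)

/-- A point in an open upper set lies in a clopen upper subset of it. -/
lemma exists_clopen_upper_mem (hX : IsLSpace X) {T : Set X} {x : X} (hTo : IsOpen T)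
    (hTu : IsUpperSet T) (hx : x ∈ T) :
    ∃ A : Set X, IsClopen A ∧ IsUpperSet A ∧ x ∈ A ∧ A ⊆ T := by
  haveI := hX.compact
  obtain ⟨C, hC, hxC, hCT⟩ := hX.clopen_basis hTo hx
  set ι := {A : Set X // IsClopen A ∧ IsUpperSet A ∧ C ⊆ A} with hι
  have hempty : Tᶜ ∩ ⋂ A : ι, A.1 = ∅ := by
    rw [eq_empty_iff_forall_notMem]
    rintro z ⟨hz1, hz2⟩
    have hcz : ∀ c ∈ C, ¬ c ≤ z := fun c hc hcz => hz1 (hTu hcz (hCT hc))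
    obtain ⟨A, hA, hAu, hCA, hzA⟩ := hX.sep (hC.isClosed.isCompact) hcz
    exact hzA (mem_iInter.mp hz2 ⟨A, hA, hAu, hCA⟩)
  obtain ⟨u, hu⟩ := (hTo.isClosed_compl.isCompact).elim_finite_subfamily_closed
    (fun A : ι => A.1) (fun A => A.2.1.isClosed) hempty
  refine ⟨⋂ A ∈ u, A.1, Set.Finite.isClopen_biInter u.finite_toSet (fun A _ => A.2.1),
    isUpperSet_iInter₂ (fun A _ => A.2.2.1), mem_iInter₂.mpr fun A _ => A.2.2.2 hxC, ?_⟩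
  intro w hw
  by_contra hwT
  exact (eq_empty_iff_forall_notMem.mp hu w) ⟨hwT, hw⟩

/-- Localic points of a clopen upper set are in its kernel (CL-spaces). -/
lemma _root_.IsCLSpace.localic_mem_kernel (hCL : IsCLSpace X) {U : Set X} (hU : IsClopen U)
    (hUu : IsUpperSet U) {y : X} (hy : y ∈ localicPart X) (hyU : y ∈ U) :
    y ∈ kernelSet U :=
  hCL.1.localic_mem hy (isUpperSet_kernelSet U) (hCL.2 U hU hUu hyU)

/-- Interpolation for the way-below relation in CL-spaces. -/
lemma _root_.IsCLSpace.interpolate (hCL : IsCLSpace X) {W V : Set X} (hW : IsClopen W)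
    (hV : IsClopen V) (hVu : IsUpperSet V) (hWV : WayBelowSet W V) :
    ∃ W' : Set X, IsClopen W' ∧ IsUpperSet W' ∧ WayBelowSet W W' ∧ WayBelowSet W' V := by
  haveI := hCL.1.compact
  set S : Set (Set X) := {D : Set X | IsClopen D ∧ IsUpperSet D ∧
    ∃ C : Set X, IsClopen C ∧ IsUpperSet C ∧ WayBelowSet C V ∧ WayBelowSet D C} with hS
  have hT₀o : IsOpen (⋃₀ S) := isOpen_sUnion fun _ hD => hD.1.isOpen
  have hT₀u : IsUpperSet (⋃₀ S) := isUpperSet_sUnion fun _ hD => hD.2.1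
  have hVsub : V ⊆ closure (⋃₀ S) := by
    have h2 : kernelSet V ⊆ closure (⋃₀ S) := by
      rintro z ⟨C, ⟨hC, hCu, hCV⟩, hzC⟩
      have h3 : z ∈ closure (kernelSet C) := hCL.2 C hC hCu hzC
      refine closure_mono ?_ h3
      rintro w ⟨D, ⟨hD, hDu, hDC⟩, hwD⟩
      exact ⟨D, ⟨hD, hDu, C, hC, hCu, hCV, hDC⟩, hwD⟩
    intro x hx
    have h1 : x ∈ closure (kernelSet V) := hCL.2 V hV hVu hx
    have := closure_mono h2 h1
    rwa [closure_closure] at this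
  have hWT : W ⊆ ⋃₀ S := hWV _ hT₀o hT₀u hVsub
  rw [sUnion_eq_iUnion] at hWT
  obtain ⟨t, ht⟩ := (hW.isClosed.isCompact).elim_finite_subcover (fun D : ↥S => D.1)
    (fun D => D.2.1.isOpen) hWT
  choose C hC hCu hCV hDC using fun D : ↥S => D.2.2.2
  refine ⟨⋃ D ∈ t, C D, Set.Finite.isClopen_biUnion t.finite_toSet (fun D _ => hC D),
    isUpperSet_iUnion₂ (fun D _ => hCu D), ?_, ?_⟩
  · intro T hTo hTu hsub
    refine ht.trans ?_
    refine iUnion₂_subset fun D hD => ?_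
    exact hDC D T hTo hTu ((subset_iUnion₂ D hD).trans hsub)
  · intro T hTo hTu hsub
    exact iUnion₂_subset fun D hD => hCV D T hTo hTu hsub

/-- A decreasing interpolating sequence below `V` starting way above `W`. -/
lemma _root_.IsCLSpace.exists_seq (hCL : IsCLSpace X) {W V : Set X} (hW : IsClopen W)
    (hV : IsClopen V) (hVu : IsUpperSet V) (hWV : WayBelowSet W V) :
    ∃ f : ℕ → Set X, (∀ n, IsClopen (f n) ∧ IsUpperSet (f n) ∧ WayBelowSet W (f n)) ∧
      f 0 ⊆ V ∧ ∀ n, WayBelowSet (f (n + 1)) (f n) := by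
  obtain ⟨W0, hW0, hW0u, hWW0, hW0V⟩ := hCL.interpolate hW hV hVu hWV
  set P := {A : Set X // IsClopen A ∧ IsUpperSet A ∧ WayBelowSet W A} with hP
  have hstep : ∀ p : P, ∃ B : Set X,
      (IsClopen B ∧ IsUpperSet B ∧ WayBelowSet W B) ∧ WayBelowSet B p.1 := by
    rintro ⟨A, hA, hAu, hWA⟩
    obtain ⟨B, h1, h2, h3, h4⟩ := hCL.interpolate hW hA hAu hWA
    exact ⟨B, ⟨h1, h2, h3⟩, h4⟩
  choose F hF1 hF2 using hstep
  set F' : P → P := fun p => ⟨F p, hF1 p⟩ with hF'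
  set p0 : P := ⟨W0, hW0, hW0u, hWW0⟩ with hp0
  refine ⟨fun n => (F'^[n] p0).1, fun n => (F'^[n] p0).2, ?_, fun n => ?_⟩
  · simpa using IsLSpace.wb_subset hW0V hV.isOpen hVu
  · show WayBelowSet (F'^[n+1] p0).1 (F'^[n] p0).1
    rw [Function.iterate_succ_apply']
    exact hF2 _

/-- Hofmann–Mislove style lemma: if the localic trace of the intersection of a
decreasing way-below sequence of clopen upper sets is covered by clopen upper
sets, then some member of the sequence admits a finite subcover. -/
lemma hm (hX : IsLSpace X) (hsp : Dense (localicPart X)) (Wf : ℕ → Set X)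
    (hWf : ∀ n, IsClopen (Wf n)) (hWfu : ∀ n, IsUpperSet (Wf n))
    (hlt : ∀ n, WayBelowSet (Wf (n + 1)) (Wf n))
    {ι : Type*} (U : ι → Set X) (hU : ∀ i, IsClopen (U i)) (hUu : ∀ i, IsUpperSet (U i))
    (hcov : (⋂ n, Wf n) ∩ localicPart X ⊆ ⋃ i, U i) :
    ∃ (n : ℕ) (t : Finset ι), Wf n ⊆ ⋃ i ∈ t, U i := by
  haveI := hX.compact
  by_contra hno
  push_neg at hno
  have hdec : ∀ {m n : ℕ}, m ≤ n → Wf n ⊆ Wf m := by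
    intro m n h
    induction h with
    | refl => exact subset_rfl
    | step h ih => exact (IsLSpace.wb_subset (hlt _) (hWf _).isOpen (hWfu _)).trans ih
  set G : Set X → Prop := fun A => ∃ n, Wf n ⊆ A with hG
  have hGmono : ∀ {A B : Set X}, A ⊆ B → G A → G B := by
    rintro A B hAB ⟨n, hn⟩; exact ⟨n, hn.trans hAB⟩
  have hGinter : ∀ {A B : Set X}, G A → G B → G (A ∩ B) := by
    rintro A B ⟨n, hn⟩ ⟨m, hm⟩
    exact ⟨max n m, subset_inter ((hdec (le_max_left n m)).trans hn)
      ((hdec (le_max_right n m)).trans hm)⟩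
  set Uinf : Set X := closure (⋃ i, U i) with hUinfdef
  have hUo : IsOpen (⋃ i, U i) := isOpen_iUnion fun i => (hU i).isOpen
  have hUu' : IsUpperSet (⋃ i, U i) := isUpperSet_iUnion hUu
  set S : Set (Set X) := {A : Set X | IsClopen A ∧ IsUpperSet A ∧ Uinf ⊆ A ∧ ¬ G A} with hSdef
  -- finite-subcover from `G (closure of an open upper set)`
  have hstepG : ∀ (T : Set X), IsOpen T → IsUpperSet T → G (closure T) →
      ∃ n, Wf n ⊆ T := by
    rintro T hTo hTu ⟨n, hn⟩
    exact ⟨n + 1, hlt n T hTo hTu hn⟩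
  have hUinfS : Uinf ∈ S := by
    refine ⟨⟨isClosed_closure, hX.eod _ hUo hUu'⟩, hX.isUpperSet_closure hUu', subset_rfl, ?_⟩
    intro hGU
    obtain ⟨n, hn⟩ := hstepG _ hUo hUu' hGU
    obtain ⟨t, ht⟩ := ((hWf n).isClosed.isCompact).elim_finite_subcover U
      (fun i => (hU i).isOpen) hn
    exact hno n t ht
  -- Zorn
  have hzorn : ∀ c ⊆ S, IsChain (fun x1 x2 => x1 ⊆ x2) c → c.Nonempty →
      ∃ ub ∈ S, ∀ s ∈ c, s ⊆ ub := by
    intro c hcS hchain ⟨A₀, hA₀⟩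
    have hco : IsOpen (⋃₀ c) := isOpen_sUnion fun A hA => (hcS hA).1.isOpen
    have hcu : IsUpperSet (⋃₀ c) := isUpperSet_sUnion fun A hA => (hcS hA).2.1
    refine ⟨closure (⋃₀ c), ⟨⟨isClosed_closure, hX.eod _ hco hcu⟩,
      hX.isUpperSet_closure hcu, (hcS hA₀).2.2.1.trans
        ((subset_sUnion_of_mem hA₀).trans subset_closure), ?_⟩,
      fun A hA => (subset_sUnion_of_mem hA).trans subset_closure⟩
    intro hGc
    obtain ⟨n, hn⟩ := hstepG _ hco hcu hGc
    rw [sUnion_eq_iUnion] at hn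
    haveI : Nonempty ↥c := ⟨⟨A₀, hA₀⟩⟩
    have hdir : Directed (fun x1 x2 : Set X => x1 ⊆ x2) (fun A : ↥c => A.1) :=
      IsChain.directed hchain
    obtain ⟨A, hA⟩ := ((hWf n).isClosed.isCompact).elim_directed_cover _
      (fun A : ↥c => (hcS A.2).1.isOpen) hn hdir
    exact (hcS A.2).2.2.2 ⟨n, hA⟩
  obtain ⟨M, -, hMS, hMmax⟩ := zorn_subset_nonempty S hzorn Uinf hUinfS
  obtain ⟨hMclopen, hMu, hMU, hMG⟩ := hMS
  -- primality
  have hprime : ∀ A B : Set X, IsClopen A → IsUpperSet A → IsClopen B → IsUpperSet B →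
      ¬ A ⊆ M → ¬ B ⊆ M → ¬ A ∩ B ⊆ M := by
    intro A B hA hAu hB hBu hAM hBM hABM
    have hGA : G (M ∪ A) := by
      by_contra h
      have hmem : M ∪ A ∈ S := ⟨hMclopen.union hA, hMu.union hAu,
        hMU.trans subset_union_left, h⟩
      exact hAM (subset_union_right.trans (hMmax hmem subset_union_left))
    have hGB : G (M ∪ B) := by
      by_contra h
      have hmem : M ∪ B ∈ S := ⟨hMclopen.union hB, hMu.union hBu,
        hMU.trans subset_union_left, h⟩
      exact hBM (subset_union_right.trans (hMmax hmem subset_union_left))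
    have h3 : G ((M ∪ A) ∩ (M ∪ B)) := hGinter hGA hGB
    rw [← union_inter_distrib_left] at h3
    exact hMG (hGmono (union_subset subset_rfl hABM) h3)
  -- the complement T of M
  set T : Set X := Mᶜ with hTdef
  have hTclopen : IsClopen T := hMclopen.compl
  have hTlower : IsLowerSet T := hMu.compl
  have hTcompact : IsCompact T := hTclopen.isClosed.isCompact
  have hTne : T.Nonempty := by
    rw [nonempty_compl]
    intro h
    exact hMG ⟨0, by rw [h]; exact subset_univ _⟩
  -- pairwise upper bounds in T
  have hub2 : ∀ x ∈ T, ∀ y ∈ T, ∃ z ∈ T, x ≤ z ∧ y ≤ z := by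
    intro x hx y hy
    by_contra h
    push_neg at h
    have hempty : (T ∩ Set.Ici y) ∩
        ⋂ A : {A : Set X // IsClopen A ∧ IsUpperSet A ∧ x ∈ A}, A.1 = ∅ := by
      rw [← hX.Ici_eq x, eq_empty_iff_forall_notMem]
      rintro z ⟨⟨hz1, hz2⟩, hz3⟩
      exact h z hz1 hz3 hz2
    obtain ⟨u, hu⟩ := (hTcompact.inter_right (hX.isClosed_Ici y)).elim_finite_subfamily_closed
      _ (fun A => A.2.1.isClosed) hempty
    set A : Set X := ⋂ B ∈ u, B.1 with hAdef
    have hA : IsClopen A := Set.Finite.isClopen_biInter u.finite_toSet (fun B _ => B.2.1)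
    have hAu : IsUpperSet A := isUpperSet_iInter₂ (fun B _ => B.2.2.1)
    have hxA : x ∈ A := mem_iInter₂.mpr fun B _ => B.2.2.2
    -- second stage: A ∩ Ici y ∩ T = ∅, shrink Ici y
    have hempty2 : (T ∩ A) ∩
        ⋂ B : {B : Set X // IsClopen B ∧ IsUpperSet B ∧ y ∈ B}, B.1 = ∅ := by
      rw [← hX.Ici_eq y, eq_empty_iff_forall_notMem]
      rintro z ⟨⟨hz1, hz2⟩, hz3⟩
      exact (eq_empty_iff_forall_notMem.mp hu z) ⟨⟨hz1, hz3⟩, hz2⟩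
    obtain ⟨v, hv⟩ := (hTcompact.inter_right hA.isClosed).elim_finite_subfamily_closed
      _ (fun B => B.2.1.isClosed) hempty2
    set B : Set X := ⋂ C ∈ v, C.1 with hBdef
    have hB : IsClopen B := Set.Finite.isClopen_biInter v.finite_toSet (fun C _ => C.2.1)
    have hBu : IsUpperSet B := isUpperSet_iInter₂ (fun C _ => C.2.2.1)
    have hyB : y ∈ B := mem_iInter₂.mpr fun C _ => C.2.2.2
    have hABM : A ∩ B ⊆ M := by
      intro w hw
      by_contra hwM
      exact (eq_empty_iff_forall_notMem.mp hv w) ⟨⟨hwM, hw.1⟩, hw.2⟩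
    exact hprime A B hA hAu hB hBu (fun hsub => hx (hsub hxA)) (fun hsub => hy (hsub hyB)) hABM
  -- finite upper bounds
  have hubFin : ∀ F : Finset X, (∀ a ∈ F, a ∈ T) → ∃ z ∈ T, ∀ a ∈ F, a ≤ z := by
    classical
    intro F
    induction F using Finset.induction_on with
    | empty => exact fun _ => ⟨hTne.choose, hTne.choose_spec, by simp⟩
    | @insert a F ha ih =>
      intro hmem
      obtain ⟨z', hz'T, hz'⟩ := ih (fun b hb => hmem b (Finset.mem_insert_of_mem hb))
      obtain ⟨z, hzT, haz, hz'z⟩ := hub2 a (hmem a (Finset.mem_insert_self a F)) z' hz'T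
      exact ⟨z, hzT, fun b hb => by
        rcases Finset.mem_insert.mp hb with rfl | hb
        · exact haz
        · exact (hz' b hb).trans hz'z⟩
  -- the generic point z
  have hZ : (T ∩ ⋂ y : ↥(T ∩ localicPart X), Set.Ici y.1).Nonempty := by
    classical
    by_contra h
    rw [not_nonempty_iff_eq_empty] at h
    obtain ⟨u, hu⟩ := hTcompact.elim_finite_subfamily_closed _
      (fun y : ↥(T ∩ localicPart X) => hX.isClosed_Ici y.1) h
    obtain ⟨z, hzT, hz⟩ := hubFin (u.image (fun y => y.1)) (by
      intro a ha
      obtain ⟨y, -, rfl⟩ := Finset.mem_image.mp ha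
      exact y.2.1)
    refine (eq_empty_iff_forall_notMem.mp hu z) ⟨hzT, mem_iInter₂.mpr fun y hy => ?_⟩
    exact hz y.1 (Finset.mem_image.mpr ⟨y, hy, rfl⟩)
  obtain ⟨z, hzT, hzub⟩ := hZ
  have hTY : T ∩ localicPart X ⊆ Set.Iic z := fun p hp =>
    mem_iInter.mp hzub ⟨p, hp⟩
  have hTsub : T ⊆ Set.Iic z := by
    have h1 : T ⊆ closure (T ∩ localicPart X) :=
      hsp.open_subset_closure_inter hTclopen.isOpen
    exact h1.trans (((hX.isClosed_Iic z).closure_subset_iff).mpr hTY)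
  have hTeq : Set.Iic z = T := subset_antisymm (fun w hw => hTlower hw hzT) hTsub
  have hzY : z ∈ localicPart X := by
    show IsClopen (Set.Iic z)
    rw [hTeq]; exact hTclopen
  have hzW : ∀ n, z ∈ Wf n := by
    intro n
    have h1 : ¬ Wf n ⊆ M := fun h => hMG ⟨n, h⟩
    obtain ⟨w, hwW, hwM⟩ := not_subset.mp h1
    exact (hWfu n) (hTsub hwM) hwW
  obtain ⟨i, hi⟩ := mem_iUnion.mp (hcov ⟨mem_iInter.mpr hzW, hzY⟩)
  exact hzT (hMU (subset_closure (mem_iUnion.mpr ⟨i, hi⟩)))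

end IsLSpace
end AuxLemmas



/-- An SL-space is a CL-space iff its localic part is locally compact:
for every open `V ⊆ Y` and `y ∈ V` there are an open `W` and a compact `K`
with `y ∈ W ⊆ K ⊆ V`. -/
theorem isCLSpace_iff_locallyCompact {X : Type*} [TopologicalSpace X] [PartialOrder X]
    (hX : IsLSpace X) (hsp : Dense (localicPart X))
    (tY : TopologicalSpace (localicPart X))
    (htY : ∀ U : Set (localicPart X), @IsOpen _ tY U ↔
      ∃ V : Set X, IsClopen V ∧ IsUpperSet V ∧ U = ((↑) : localicPart X → X) ⁻¹' V) :
    IsCLSpace X ↔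
      ∀ V : Set (localicPart X), @IsOpen _ tY V → ∀ y ∈ V,
        ∃ W K : Set (localicPart X), @IsOpen _ tY W ∧ @IsCompact _ tY K ∧
          y ∈ W ∧ W ⊆ K ∧ K ⊆ V := by
  constructor
  · -- CL-space → locally compact
    intro hCL Vt hVt y hyV
    obtain ⟨V₀, hV₀, hV₀u, rfl⟩ := (htY _).mp hVt
    have hyY : (y : X) ∈ localicPart X := y.2
    have hyV₀ : (y : X) ∈ V₀ := hyV
    obtain ⟨W, ⟨hW, hWu, hWV⟩, hyW⟩ := hCL.localic_mem_kernel hV₀ hV₀u hyY hyV₀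
    obtain ⟨f, hf, hf0, hflt⟩ := hCL.exists_seq hW hV₀ hV₀u hWV
    have hWfn : ∀ n, W ⊆ f n := fun n =>
      IsLSpace.wb_subset (hf n).2.2 (hf n).1.isOpen (hf n).2.1
    refine ⟨((↑) : localicPart X → X) ⁻¹' W, ((↑) : localicPart X → X) ⁻¹' ⋂ n, f n,
      (htY _).mpr ⟨W, hW, hWu, rfl⟩, ?_, hyW, ?_, ?_⟩
    · -- compactness of K
      refine @isCompact_of_finite_subcover _ tY _ (fun {κ} 𝒰 h𝒰 hcov => ?_)
      choose Ui hUi hUiu hUieq using fun i => (htY (𝒰 i)).mp (h𝒰 i)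
      have hcov' : (⋂ n, f n) ∩ localicPart X ⊆ ⋃ i, Ui i := by
        rintro x ⟨hx1, hx2⟩
        have hmem : (⟨x, hx2⟩ : localicPart X) ∈ ⋃ i, 𝒰 i := hcov hx1
        obtain ⟨i, hi⟩ := mem_iUnion.mp hmem
        have : (⟨x, hx2⟩ : localicPart X) ∈ ((↑) : localicPart X → X) ⁻¹' Ui i := by
          rw [← hUieq i]; exact hi
        exact mem_iUnion.mpr ⟨i, this⟩
      obtain ⟨n, t, hnt⟩ := IsLSpace.hm hX hsp f (fun n => (hf n).1) (fun n => (hf n).2.1)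
        hflt Ui hUi hUiu hcov'
      refine ⟨t, fun p hp => ?_⟩
      have hpW : (p : X) ∈ ⋃ i ∈ t, Ui i := hnt (mem_iInter.mp hp n)
      obtain ⟨i, hit, hpi⟩ := mem_iUnion₂.mp hpW
      refine mem_iUnion₂.mpr ⟨i, hit, ?_⟩
      rw [hUieq i]; exact hpi
    · -- W̃ ⊆ K
      intro p hp
      exact mem_preimage.mpr (mem_iInter.mpr fun n => hWfn n hp)
    · -- K ⊆ Ṽ
      intro p hp
      exact hf0 (mem_iInter.mp (mem_preimage.mp hp) 0)
  · -- locally compact → CL-space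
    intro hloc
    refine ⟨hX, fun U hU hUu => ?_⟩
    have key : U ∩ localicPart X ⊆ kernelSet U := by
      rintro x ⟨hxU, hxY⟩
      have hUt : @IsOpen _ tY (((↑) : localicPart X → X) ⁻¹' U) :=
        (htY _).mpr ⟨U, hU, hUu, rfl⟩
      obtain ⟨Wt, K, hWto, hK, hyWt, hWtK, hKU⟩ := hloc _ hUt ⟨x, hxY⟩ hxU
      obtain ⟨V, hV, hVu, rfl⟩ := (htY _).mp hWto
      refine ⟨V, ⟨hV, hVu, ?_⟩, hyWt⟩
      -- WayBelowSet V U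
      intro T hTo hTu hUclT
      choose A hA hAu hmemA hAT using
        fun p : ↥T => hX.exists_clopen_upper_mem hTo hTu p.2
      have hKcov : K ⊆ ⋃ p : ↥T, ((↑) : localicPart X → X) ⁻¹' (A p) := by
        intro q hq
        have hqU : (q : X) ∈ U := hKU hq
        have hqT : (q : X) ∈ T := hX.localic_mem q.2 hTu (hUclT hqU)
        exact mem_iUnion.mpr ⟨⟨(q : X), hqT⟩, hmemA _⟩
      have hopen : ∀ p : ↥T, @IsOpen _ tY (((↑) : localicPart X → X) ⁻¹' (A p)) :=
        fun p => (htY _).mpr ⟨A p, hA p, hAu p, rfl⟩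
      obtain ⟨t, ht⟩ := @IsCompact.elim_finite_subcover _ tY _ _ hK _ hopen hKcov
      have h1 : V ∩ localicPart X ⊆ ⋃ p ∈ t, A p := by
        rintro v ⟨hv1, hv2⟩
        have hmem : (⟨v, hv2⟩ : localicPart X) ∈ K := hWtK hv1
        obtain ⟨p, hpt, hp⟩ := mem_iUnion₂.mp (ht hmem)
        exact mem_iUnion₂.mpr ⟨p, hpt, hp⟩
      have h2 : V ⊆ closure (V ∩ localicPart X) :=
        hsp.open_subset_closure_inter hV.isOpen
      have h3 : IsClosed (⋃ p ∈ t, A p) :=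
        (Set.Finite.isClopen_biUnion t.finite_toSet (fun p _ => hA p)).isClosed
      refine (h2.trans (h3.closure_subset_iff.mpr h1)).trans ?_
      exact iUnion₂_subset fun p _ => hAT p
    intro x hx
    have h2 : U ⊆ closure (U ∩ localicPart X) := hsp.open_subset_closure_inter hU.isOpen
    exact closure_mono key (h2 hx)
end

section
/- Let X be a CL-space with localic part Y. Then for every clopen upper set U of X, ker U = ↑(U ∩ Y), where ↑S denotes the upward closure of S. -/
open Set Topology

section Aux

variable {X : Type*} [TopologicalSpace X] [PartialOrder X]

theorem IsLSpace.isClosed_Iic' (hL : IsLSpace X) (x : X) : IsClosed (Set.Iic x) := by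
  rw [← isOpen_compl_iff]
  have h : (Set.Iic x)ᶜ = ⋃₀ {A : Set X | IsClopen A ∧ IsUpperSet A ∧ x ∉ A} := by
    ext z
    simp only [mem_compl_iff, mem_Iic, mem_sUnion, mem_setOf_eq]
    constructor
    · intro hz
      obtain ⟨A, hA, hAu, hzA, hxA⟩ := hL.priestley z x hz
      exact ⟨A, ⟨hA, hAu, hxA⟩, hzA⟩
    · rintro ⟨A, ⟨hA, hAu, hxA⟩, hzA⟩ hzx
      exact hxA (hAu hzx hzA)
  rw [h]
  exact isOpen_sUnion fun A hA => hA.1.isOpen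

theorem IsLSpace.isClosed_Ici' (hL : IsLSpace X) (x : X) : IsClosed (Set.Ici x) := by
  have h : Set.Ici x = ⋂₀ {A : Set X | IsClopen A ∧ IsUpperSet A ∧ x ∈ A} := by
    ext z
    simp only [mem_Ici, mem_sInter, mem_setOf_eq]
    constructor
    · rintro hxz A ⟨hA, hAu, hxA⟩
      exact hAu hxz hxA
    · intro h
      by_contra hxz
      obtain ⟨A, hA, hAu, hxA, hzA⟩ := hL.priestley x z hxz
      exact hzA (h A ⟨hA, hAu, hxA⟩)
  rw [h]
  exact isClosed_sInter fun A hA => hA.1.isClosed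

theorem IsLSpace.isUpperSet_closure' (hL : IsLSpace X) {W : Set X} (hWo : IsOpen W)
    (hWu : IsUpperSet W) : IsUpperSet (closure W) := by
  intro z w hzw hz
  by_contra hw
  have hcl : IsClopen ((closure W)ᶜ) := ⟨(hL.eod W hWo hWu).isClosed_compl, isClosed_closure.isOpen_compl⟩
  have hD := hL.esakia _ hcl
  have hzD : z ∈ (lowerClosure ((closure W)ᶜ) : Set X) := ⟨w, hw, hzw⟩
  obtain ⟨v, hvD, hvW⟩ := mem_closure_iff.1 hz _ hD.isOpen hzD
  obtain ⟨u, hu, hvu⟩ := hvD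
  exact hu (subset_closure (hWu hvu hvW))

theorem IsLSpace.isClopen_closure' (hL : IsLSpace X) {W : Set X} (hWo : IsOpen W)
    (hWu : IsUpperSet W) : IsClopen (closure W) :=
  ⟨isClosed_closure, hL.eod W hWo hWu⟩

theorem wayBelow_subset' {V U : Set X} (hUo : IsOpen U) (hUu : IsUpperSet U)
    (h : WayBelowSet V U) : V ⊆ U :=
  h U hUo hUu subset_closure

theorem wayBelow_mono_left' {V' V U : Set X} (hVV : V' ⊆ V) (h : WayBelowSet V U) :
    WayBelowSet V' U := fun W hW hWu hc => hVV.trans (h W hW hWu hc)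

theorem wayBelow_mono_right' {V U U' : Set X} (h : WayBelowSet V U) (hUU' : U ⊆ U') :
    WayBelowSet V U' := fun W hW hWu hc => h W hW hWu (hUU'.trans hc)

theorem wayBelow_biUnion' {ι : Type*} {t : Finset ι} {V : ι → Set X} {U : Set X}
    (h : ∀ i ∈ t, WayBelowSet (V i) U) : WayBelowSet (⋃ i ∈ t, V i) U :=
  fun W hW hWu hc => iUnion₂_subset fun i hi => h i hi W hW hWu hc

theorem kernelSet_isOpen' (U : Set X) : IsOpen (kernelSet U) :=
  isOpen_sUnion fun _ hV => hV.1.isOpen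

theorem kernelSet_isUpperSet' (U : Set X) : IsUpperSet (kernelSet U) :=
  isUpperSet_sUnion fun _ hV => hV.2.1

theorem wayBelow_interpolate (hL : IsLSpace X)
    (hCL : ∀ U : Set X, IsClopen U → IsUpperSet U → U ⊆ closure (kernelSet U))
    {U V : Set X} (hU : IsClopen U) (hUu : IsUpperSet U)
    (hV : IsClopen V) (hVU : WayBelowSet V U) :
    ∃ V', IsClopen V' ∧ IsUpperSet V' ∧ WayBelowSet V V' ∧ WayBelowSet V' U := by
  haveI := hL.compact
  set S : Set (Set X × Set X) := {p | (IsClopen p.1 ∧ IsUpperSet p.1 ∧ WayBelowSet p.1 p.2) ∧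
    (IsClopen p.2 ∧ IsUpperSet p.2 ∧ WayBelowSet p.2 U)} with hSdef
  set M : Set X := ⋃ p : S, (p : Set X × Set X).1 with hMdef
  have hMo : IsOpen M := isOpen_iUnion fun p => p.2.1.1.isOpen
  have hMu : IsUpperSet M := isUpperSet_iUnion fun p => p.2.1.2.1
  have hUM : U ⊆ closure M := by
    have h1 : kernelSet U ⊆ closure M := by
      rintro w ⟨B, ⟨hB, hBu, hBU⟩, hwB⟩
      have h2 : kernelSet B ⊆ M := by
        rintro a ⟨A, ⟨hA, hAu, hAB⟩, haA⟩
        exact mem_iUnion.2 ⟨⟨(A, B), ⟨hA, hAu, hAB⟩, hB, hBu, hBU⟩, haA⟩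
      exact (closure_mono h2) ((hCL B hB hBu) hwB)
    calc U ⊆ closure (kernelSet U) := hCL U hU hUu
      _ ⊆ closure (closure M) := closure_mono h1
      _ = closure M := closure_closure
  have hVM : V ⊆ M := hVU M hMo hMu hUM
  obtain ⟨t, ht⟩ := hV.isClosed.isCompact.elim_finite_subcover
    (fun p : S => (p : Set X × Set X).1) (fun p => p.2.1.1.isOpen) hVM
  refine ⟨⋃ p ∈ t, (p : Set X × Set X).2, ?_, ?_, ?_, ?_⟩
  · exact isClopen_biUnion_finset fun p _ => p.2.2.1
  · exact isUpperSet_iUnion₂ fun p _ => p.2.2.2.1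
  · refine wayBelow_mono_left' ht (wayBelow_biUnion' fun p hp => ?_)
    exact wayBelow_mono_right' p.2.1.2.2 (subset_biUnion_of_mem (u := fun p : S => (p : Set X × Set X).2) hp)
  · exact wayBelow_biUnion' fun p _ => p.2.2.2.2

theorem exists_wayBelow_chain (hL : IsLSpace X)
    (hCL : ∀ U : Set X, IsClopen U → IsUpperSet U → U ⊆ closure (kernelSet U))
    {U V : Set X} (hU : IsClopen U) (hUu : IsUpperSet U)
    (hV : IsClopen V) (hVU : WayBelowSet V U) :
    ∃ W : ℕ → Set X, W 0 = U ∧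
      (∀ n, IsClopen (W n) ∧ IsUpperSet (W n) ∧ WayBelowSet V (W n)) ∧
      (∀ n, WayBelowSet (W (n + 1)) (W n)) := by
  let T := {A : Set X // IsClopen A ∧ IsUpperSet A ∧ WayBelowSet V A}
  have hstep : ∀ A : T, ∃ B : T, WayBelowSet B.val A.val := by
    rintro ⟨A, hA1, hA2, hA3⟩
    obtain ⟨V', h1, h2, h3, h4⟩ := wayBelow_interpolate hL hCL hA1 hA2 hV hA3
    exact ⟨⟨V', h1, h2, h3⟩, h4⟩
  choose g hg using hstep
  refine ⟨fun n => (g^[n] ⟨U, hU, hUu, hVU⟩).val, rfl, fun n => (g^[n] _).2, fun n => ?_⟩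
  show WayBelowSet (g^[n + 1] ⟨U, hU, hUu, hVU⟩).val (g^[n] ⟨U, hU, hUu, hVU⟩).val
  rw [Function.iterate_succ_apply']
  exact hg _

end Aux

/-- In a CL-space, the kernel of a clopen upper set `U` is the upward closure
of `U ∩ Y`, where `Y` is the localic part. -/
theorem kernelSet_eq_upperClosure {X : Type*} [TopologicalSpace X] [PartialOrder X]
    (hX : IsCLSpace X) :
    ∀ U : Set X, IsClopen U → IsUpperSet U →
      kernelSet U = (upperClosure (U ∩ localicPart X) : Set X) := by
  obtain ⟨hL, hCL⟩ := hX
  haveI := hL.compact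
  intro U hU hUu
  apply Set.Subset.antisymm
  · -- hard direction: kernelSet U ⊆ ↑(U ∩ Y)
    rintro x ⟨V, ⟨hV, hVu, hVU⟩, hxV⟩
    obtain ⟨W, hW0, hWp, hWc⟩ := exists_wayBelow_chain hL hCL hU hUu hV hVU
    have hWsub : ∀ n, W (n + 1) ⊆ W n := fun n =>
      wayBelow_subset' (hWp n).1.isOpen (hWp n).2.1 (hWc n)
    have hWanti : ∀ ⦃n m : ℕ⦄, n ≤ m → W m ⊆ W n := by
      intro n m h
      induction h with
      | refl => exact Set.Subset.rfl
      | @step k hk ih => exact (hWsub k).trans ih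
    set Z : Set (Set X) := {P | IsClopen P ∧ IsUpperSet P ∧ (Set.Iic x)ᶜ ⊆ P ∧
      ∀ n, ¬ W n ⊆ P} with hZdef
    have hco : IsOpen ((Set.Iic x)ᶜ) := (hL.isClosed_Iic' x).isOpen_compl
    have hcu : IsUpperSet ((Set.Iic x)ᶜ) := (isLowerSet_Iic x).compl
    have hP0 : closure ((Set.Iic x)ᶜ) ∈ Z := by
      refine ⟨hL.isClopen_closure' hco hcu, hL.isUpperSet_closure' hco hcu, subset_closure, ?_⟩
      intro n hn
      have hVsub : V ⊆ (Set.Iic x)ᶜ := (hWp n).2.2 _ hco hcu hn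
      exact hVsub hxV (mem_Iic.2 le_rfl)
    have hchains : ∀ c ⊆ Z, IsChain (· ⊆ ·) c → c.Nonempty →
        ∃ ub ∈ Z, ∀ s ∈ c, s ⊆ ub := by
      intro c hcZ hchain hcne
      obtain ⟨c₀, hc₀⟩ := hcne
      have hco' : IsOpen (⋃₀ c) := isOpen_sUnion fun s hs => (hcZ hs).1.isOpen
      have hcu' : IsUpperSet (⋃₀ c) := isUpperSet_sUnion fun s hs => (hcZ hs).2.1
      refine ⟨closure (⋃₀ c), ⟨hL.isClopen_closure' hco' hcu', hL.isUpperSet_closure' hco' hcu',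
        ((hcZ hc₀).2.2.1).trans ((subset_sUnion_of_mem hc₀).trans subset_closure), ?_⟩,
        fun s hs => (subset_sUnion_of_mem hs).trans subset_closure⟩
      intro n hn
      have h1 : W (n + 1) ⊆ ⋃₀ c := hWc n _ hco' hcu' hn
      haveI : Nonempty c := ⟨⟨c₀, hc₀⟩⟩
      have hdir : Directed (· ⊆ ·) (fun s : c => (s : Set X)) :=
        hchain.directedOn.directed_val
      obtain ⟨s₀, hs₀⟩ := (hWp (n + 1)).1.isClosed.isCompact.elim_directed_cover
        (fun s : c => (s : Set X)) (fun s => (hcZ s.2).1.isOpen)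
        (by rwa [sUnion_eq_iUnion] at h1) hdir
      exact (hcZ s₀.2).2.2.2 (n + 1) hs₀
    obtain ⟨P, hP0P, hPmax⟩ := zorn_subset_nonempty Z hchains _ hP0
    have hPZ : P ∈ Z := hPmax.1
    obtain ⟨hPcl, hPu, hPIic, hPW⟩ := hPZ
    -- primeness of P
    have hprime : ∀ A B : Set X, IsClopen A → IsUpperSet A → IsClopen B → IsUpperSet B →
        A ∩ B ⊆ P → A ⊆ P ∨ B ⊆ P := by
      intro A B hA hAu hB hBu hAB
      by_contra hcon
      push_neg at hcon
      obtain ⟨hAP, hBP⟩ := hcon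
      have hmem : ∀ C : Set X, IsClopen C → IsUpperSet C → ¬ C ⊆ P →
          ∃ n, W n ⊆ P ∪ C := by
        intro C hC hCu hCP
        by_contra hall
        push_neg at hall
        have hin : P ∪ C ∈ Z := ⟨hPcl.union hC, hPu.union hCu,
          hPIic.trans subset_union_left, hall⟩
        have hle : P ∪ C ⊆ P := hPmax.2 hin subset_union_left
        exact hCP (subset_union_right.trans hle)
      obtain ⟨n, hn⟩ := hmem A hA hAu hAP
      obtain ⟨m, hm⟩ := hmem B hB hBu hBP
      refine hPW (max n m) ?_
      intro w hw
      rcases hn (hWanti (le_max_left n m) hw) with h | h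
      · exact h
      rcases hm (hWanti (le_max_right n m) hw) with h' | h'
      · exact h'
      exact hAB ⟨h, h'⟩
    -- Pᶜ is up-directed
    have hdir2 : ∀ a ∈ Pᶜ, ∀ b ∈ Pᶜ, ∃ e ∈ Pᶜ, a ≤ e ∧ b ≤ e := by
      intro a ha b hb
      set 𝒜 : Set (Set X) := {A | IsClopen A ∧ IsUpperSet A ∧ a ∈ A} with h𝒜
      set ℬ : Set (Set X) := {B | IsClopen B ∧ IsUpperSet B ∧ b ∈ B} with hℬ
      have hAuniv : (Set.univ : Set X) ∈ 𝒜 := ⟨isClopen_univ, isUpperSet_univ, mem_univ a⟩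
      have hBuniv : (Set.univ : Set X) ∈ ℬ := ⟨isClopen_univ, isUpperSet_univ, mem_univ b⟩
      haveI : Nonempty 𝒜 := ⟨⟨_, hAuniv⟩⟩
      haveI : Nonempty ℬ := ⟨⟨_, hBuniv⟩⟩
      set F : 𝒜 × ℬ → Set X := fun q => (q.1 : Set X) ∩ (q.2 : Set X) ∩ Pᶜ with hF
      have hFne : ∀ q, (F q).Nonempty := by
        rintro ⟨⟨A, hA, hAu, haA⟩, ⟨B, hB, hBu, hbB⟩⟩
        have hns : ¬ A ∩ B ⊆ P := by
          intro h
          rcases hprime A B hA hAu hB hBu h with h' | h'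
          · exact ha (h' haA)
          · exact hb (h' hbB)
        obtain ⟨w, hw1, hw2⟩ := not_subset.1 hns
        exact ⟨w, hw1, hw2⟩
      have hFdir : Directed (· ⊇ ·) F := by
        rintro ⟨⟨A₁, hA₁⟩, ⟨B₁, hB₁⟩⟩ ⟨⟨A₂, hA₂⟩, ⟨B₂, hB₂⟩⟩
        refine ⟨⟨⟨A₁ ∩ A₂, hA₁.1.inter hA₂.1, hA₁.2.1.inter hA₂.2.1, hA₁.2.2, hA₂.2.2⟩,
          ⟨B₁ ∩ B₂, hB₁.1.inter hB₂.1, hB₁.2.1.inter hB₂.2.1, hB₁.2.2, hB₂.2.2⟩⟩, ?_, ?_⟩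
        · rintro w ⟨⟨hwA, hwB⟩, hwP⟩
          exact ⟨⟨hwA.1, hwB.1⟩, hwP⟩
        · rintro w ⟨⟨hwA, hwB⟩, hwP⟩
          exact ⟨⟨hwA.2, hwB.2⟩, hwP⟩
      have hFcl : ∀ q, IsClosed (F q) := fun q =>
        ((q.1.2.1.isClosed.inter q.2.2.1.isClosed).inter hPcl.isOpen.isClosed_compl)
      obtain ⟨e, he⟩ := IsCompact.nonempty_iInter_of_directed_nonempty_isCompact_isClosed
        F hFdir hFne (fun q => (hFcl q).isCompact) hFcl
      simp only [mem_iInter] at he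
      refine ⟨e, (he ⟨⟨_, hAuniv⟩, ⟨_, hBuniv⟩⟩).2, ?_, ?_⟩
      · by_contra hae
        obtain ⟨A₀, hA₀, hA₀u, haA₀, heA₀⟩ := hL.priestley a e hae
        exact heA₀ (he ⟨⟨A₀, hA₀, hA₀u, haA₀⟩, ⟨_, hBuniv⟩⟩).1.1
      · by_contra hbe
        obtain ⟨B₀, hB₀, hB₀u, hbB₀, heB₀⟩ := hL.priestley b e hbe
        exact heB₀ (he ⟨⟨_, hAuniv⟩, ⟨B₀, hB₀, hB₀u, hbB₀⟩⟩).1.2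
    -- Pᶜ has a greatest element y
    obtain ⟨u, huU, huP⟩ := not_subset.1 (hW0 ▸ hPW 0)
    haveI : Nonempty ↥(Pᶜ) := ⟨⟨u, huP⟩⟩
    set G : ↥(Pᶜ) → Set X := fun c => Set.Ici (c : X) ∩ Pᶜ with hG
    have hGdir : Directed (· ⊇ ·) G := by
      rintro ⟨a, ha⟩ ⟨b, hb⟩
      obtain ⟨e, heP, hae, hbe⟩ := hdir2 a ha b hb
      refine ⟨⟨e, heP⟩, ?_, ?_⟩
      · rintro w ⟨hw1, hw2⟩; exact ⟨hae.trans hw1, hw2⟩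
      · rintro w ⟨hw1, hw2⟩; exact ⟨hbe.trans hw1, hw2⟩
    have hGcl : ∀ c, IsClosed (G c) := fun c =>
      (hL.isClosed_Ici' _).inter hPcl.isOpen.isClosed_compl
    obtain ⟨y, hy⟩ := IsCompact.nonempty_iInter_of_directed_nonempty_isCompact_isClosed
      G hGdir (fun c => ⟨c, mem_Ici.2 le_rfl, c.2⟩) (fun c => (hGcl c).isCompact) hGcl
    simp only [mem_iInter] at hy
    have hyP : y ∉ P := (hy ⟨u, huP⟩).2
    have hge : ∀ c, c ∉ P → c ≤ y := fun c hc => (hy ⟨c, hc⟩).1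
    have hIic_eq : Set.Iic y = Pᶜ := by
      ext z
      constructor
      · intro hz hzP
        exact hyP (hPu hz hzP)
      · intro hz
        exact hge z hz
    have hyY : y ∈ localicPart X := by
      show IsClopen (Set.Iic y)
      rw [hIic_eq]
      exact hPcl.compl
    have hyU : y ∈ U := hUu (hge u huP) huU
    have hyx : y ≤ x := by
      by_contra h
      exact hyP (hPIic h)
    exact ⟨y, ⟨hyU, hyY⟩, hyx⟩
  · -- easy direction
    rintro x ⟨y, ⟨hyU, hyY⟩, hyx⟩
    have hIic : IsClopen (Set.Iic y) := hyY
    have h1 : y ∈ closure (kernelSet U) := hCL U hU hUu hyU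
    obtain ⟨w, hw⟩ := mem_closure_iff.1 h1 (Set.Iic y) hIic.isOpen (mem_Iic.2 le_rfl)
    obtain ⟨V, hVp, hwV⟩ := hw.2
    exact ⟨V, hVp, hVp.2.1 ((mem_Iic.1 hw.1).trans hyx) hwV⟩
end

section
/- Let X₁ and X₂ be CL-spaces with localic parts Y₁ and Y₂, and let f : X₁ → X₂ be an L-morphism. The following are equivalent: (1) f is proper; (2) f⁻¹(↑(U ∩ Y₂)) = ↑(f⁻¹(U) ∩ Y₁) for every clopen upper set U of X₂; (3) f⁻¹(↑y) is a Scott upset of X₁ for every y ∈ Y₂; (4) f⁻¹(F) is a Scott upset of X₁ for every Scott upset F of X₂; (5) ↓f(x) ∩ Y₂ ⊆ ↓f(↓x ∩ Y₁) for every x ∈ X₁. -/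
open Set Topology

namespace LS


variable {X : Type*} [TopologicalSpace X] [PartialOrder X]

lemma closed_Iic (hX : IsLSpace X) (a : X) : IsClosed (Iic a) := by
  rw [← isOpen_compl_iff]
  refine isOpen_iff_forall_mem_open.2 fun z hz => ?_
  obtain ⟨U, hUc, hUu, hzU, haU⟩ := hX.priestley z a hz
  exact ⟨U, fun u hu hua => haU (hUu hua hu), hUc.2, hzU⟩

lemma closed_Ici (hX : IsLSpace X) (a : X) : IsClosed (Ici a) := by
  rw [← isOpen_compl_iff]
  refine isOpen_iff_forall_mem_open.2 fun z hz => ?_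
  obtain ⟨U, hUc, hUu, haU, hzU⟩ := hX.priestley a z hz
  exact ⟨Uᶜ, fun u hu (hau : a ≤ u) => hu (hUu hau haU), hUc.compl.2, hzU⟩

lemma basis (hX : IsLSpace X) {O : Set X} (hO : IsOpen O) {x : X} (hx : x ∈ O) :
    ∃ C : Set X, IsClopen C ∧ x ∈ C ∧ C ⊆ O := by
  haveI := hX.compact
  have h : ∀ z : ↥(Oᶜ), ∃ C : Set X, IsClopen C ∧ x ∈ C ∧ (z : X) ∉ C := by
    rintro ⟨z, hz⟩
    rcases em (x ≤ z) with hxz | hxz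
    · have hzx : ¬ z ≤ x := fun h' => hz (le_antisymm hxz h' ▸ hx)
      obtain ⟨U, hUc, hUu, hzU, hxU⟩ := hX.priestley z x hzx
      exact ⟨Uᶜ, hUc.compl, hxU, fun h' => h' hzU⟩
    · obtain ⟨U, hUc, hUu, hxU, hzU⟩ := hX.priestley x z hxz
      exact ⟨U, hUc, hxU, hzU⟩
  choose C hC hxC hzC using h
  have hcov : Oᶜ ⊆ ⋃ z : ↥(Oᶜ), (C z)ᶜ := fun z hz =>
    mem_iUnion.2 ⟨⟨z, hz⟩, hzC ⟨z, hz⟩⟩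
  obtain ⟨t, ht⟩ := (hO.isClosed_compl.isCompact).elim_finite_subcover _
    (fun z => (hC z).compl.2) hcov
  refine ⟨⋂ z ∈ t, C z, isClopen_biInter_finset fun z _ => hC z,
    mem_iInter₂.2 fun z _ => hxC z, fun u hu => ?_⟩
  by_contra huO
  obtain ⟨z, hzt, hz⟩ := mem_iUnion₂.1 (ht huO)
  exact hz (mem_iInter₂.1 hu z hzt)

lemma open_lowerClosure (hX : IsLSpace X) {O : Set X} (hO : IsOpen O) :
    IsOpen (lowerClosure O : Set X) := by
  have : (lowerClosure O : Set X) =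
      ⋃ C : {C : Set X // IsClopen C ∧ C ⊆ O}, (lowerClosure (C : Set X) : Set X) := by
    apply subset_antisymm
    · rintro z hz
      obtain ⟨w, hwO, hzw⟩ := hz
      obtain ⟨C, hCc, hwC, hCO⟩ := basis hX hO hwO
      exact mem_iUnion.2 ⟨⟨C, hCc, hCO⟩, w, hwC, hzw⟩
    · rintro z hz
      obtain ⟨⟨C, hCc, hCO⟩, hzC⟩ := mem_iUnion.1 hz
      obtain ⟨w, hwC, hzw⟩ := hzC
      exact ⟨w, hCO hwC, hzw⟩
  rw [this]
  exact isOpen_iUnion fun C => (hX.esakia _ C.2.1).2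

lemma isUpperSet_closure (hX : IsLSpace X) {S : Set X} (hS : IsUpperSet S) :
    IsUpperSet (closure S) := by
  intro a b hab ha
  by_contra hb
  have hO : IsOpen ((closure S)ᶜ) := isClosed_closure.isOpen_compl
  have haD : a ∈ (lowerClosure ((closure S)ᶜ) : Set X) := ⟨b, hb, hab⟩
  obtain ⟨w, hw, hwS⟩ := mem_closure_iff.1 ha _ (open_lowerClosure hX hO) haD
  obtain ⟨o, ho, hwo⟩ := hw
  exact ho (subset_closure (hS hwo hwS))

lemma exists_clopen_upper_between (hX : IsLSpace X) {W : Set X} (hWo : IsOpen W)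
    (hWu : IsUpperSet W) {x : X} (hx : x ∈ W) :
    ∃ A : Set X, IsClopen A ∧ IsUpperSet A ∧ x ∈ A ∧ A ⊆ W := by
  haveI := hX.compact
  have h : ∀ d : ↥(Wᶜ), ∃ U : Set X, IsClopen U ∧ IsUpperSet U ∧ x ∈ U ∧ (d : X) ∉ U := by
    rintro ⟨d, hd⟩
    exact hX.priestley x d fun hxd => hd (hWu hxd hx)
  choose U hUc hUu hxU hdU using h
  have hcov : Wᶜ ⊆ ⋃ d : ↥(Wᶜ), (U d)ᶜ := fun d hd =>
    mem_iUnion.2 ⟨⟨d, hd⟩, hdU ⟨d, hd⟩⟩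
  obtain ⟨t, ht⟩ := (hWo.isClosed_compl.isCompact).elim_finite_subcover _
    (fun d => (hUc d).compl.2) hcov
  refine ⟨⋂ d ∈ t, U d, isClopen_biInter_finset fun d _ => hUc d,
    isUpperSet_iInter₂ fun d _ => hUu d, mem_iInter₂.2 fun d _ => hxU d, fun u hu => ?_⟩
  by_contra huW
  obtain ⟨d, hdt, hd⟩ := mem_iUnion₂.1 (ht huW)
  exact hd (mem_iInter₂.1 hu d hdt)

lemma localic_mem_of_mem_closure {y : X} {W : Set X} (hy : IsClopen (Iic y))
    (hWu : IsUpperSet W) (h : y ∈ closure W) : y ∈ W := by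
  obtain ⟨w, hw, hwW⟩ := mem_closure_iff.1 h _ hy.2 le_rfl
  exact hWu hw hwW

lemma localic_of_forall (hX : IsLSpace X) {y : X}
    (h : ∀ W : Set X, IsOpen W → IsUpperSet W → y ∈ closure W → y ∈ W) :
    IsClopen (Iic y) := by
  set W : Set X := (Iic y)ᶜ with hW
  have hWo : IsOpen W := (closed_Iic hX y).isOpen_compl
  have hWu : IsUpperSet W := IsLowerSet.compl (isLowerSet_Iic y)
  have hy : y ∉ closure W := fun hc => (h W hWo hWu hc) le_rfl
  have hIic : Iic y = (lowerClosure ((closure W)ᶜ) : Set X) := by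
    apply subset_antisymm
    · exact fun z hz => ⟨y, hy, hz⟩
    · rintro z ⟨o, ho, hzo⟩
      have : o ∈ Iic y := by
        by_contra hoy
        exact ho (subset_closure hoy)
      exact le_trans hzo this
  refine ⟨closed_Iic hX y, ?_⟩
  rw [hIic]
  exact open_lowerClosure hX isClosed_closure.isOpen_compl

lemma exists_minimal_below (hX : IsLSpace X) {F : Set X} {x : X} (hF : IsClosed F)
    (hx : x ∈ F) : ∃ m, m ∈ F ∧ m ≤ x ∧ ∀ z ∈ F, z ≤ m → z = m := by
  haveI := hX.compact
  set S : Set (Set X) := {C | ∃ z, z ∈ F ∧ z ≤ x ∧ C = F ∩ Iic z} with hS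
  have hzorn : ∀ c ⊆ S, IsChain (· ⊆ ·) c → c.Nonempty → ∃ lb ∈ S, ∀ s ∈ c, lb ⊆ s := by
    rintro c hcS hchain ⟨c₀, hc₀⟩
    have hne : ∀ C : ↥c, (C : Set X).Nonempty := by
      rintro ⟨C, hC⟩
      obtain ⟨z, hzF, _, rfl⟩ := hcS hC
      exact ⟨z, hzF, le_rfl⟩
    have hclosed : ∀ C : ↥c, IsClosed (C : Set X) := by
      rintro ⟨C, hC⟩
      obtain ⟨z, hzF, _, rfl⟩ := hcS hC
      exact hF.inter (closed_Iic hX z)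
    haveI : Nonempty ↥c := ⟨⟨c₀, hc₀⟩⟩
    have hdir : Directed (· ⊇ ·) (fun C : ↥c => (C : Set X)) := by
      rintro ⟨C₁, h₁⟩ ⟨C₂, h₂⟩
      rcases hchain.total h₁ h₂ with h | h
      · exact ⟨⟨C₁, h₁⟩, subset_rfl, h⟩
      · exact ⟨⟨C₂, h₂⟩, h, subset_rfl⟩
    obtain ⟨w, hw⟩ := IsCompact.nonempty_iInter_of_directed_nonempty_isCompact_isClosed
      (fun C : ↥c => (C : Set X)) hdir hne (fun C => (hclosed C).isCompact) hclosed
    have hwF : w ∈ F ∧ w ≤ x := by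
      have hwc₀ := mem_iInter.1 hw ⟨c₀, hc₀⟩
      obtain ⟨z, hzF, hzx, rfl⟩ := hcS hc₀
      exact ⟨hwc₀.1, le_trans hwc₀.2 hzx⟩
    refine ⟨F ∩ Iic w, ⟨w, hwF.1, hwF.2, rfl⟩, fun C hC => ?_⟩
    intro u hu
    have huC := mem_iInter.1 hw ⟨C, hC⟩
    obtain ⟨z, hzF, hzx, rfl⟩ := hcS hC
    exact ⟨hu.1, le_trans hu.2 huC.2⟩
  obtain ⟨m, hmsub, hm⟩ := zorn_superset_nonempty S hzorn (F ∩ Iic x) ⟨x, hx, le_rfl, rfl⟩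
  obtain ⟨z, hzF, hzx, hmz⟩ := hm.1
  subst hmz
  refine ⟨z, hzF, hzx, fun w hwF hwz => ?_⟩
  have hin : F ∩ Iic w ∈ S := ⟨w, hwF, le_trans hwz hzx, rfl⟩
  have heq : F ∩ Iic z ⊆ F ∩ Iic w :=
    hm.2 hin (fun u hu => ⟨hu.1, le_trans hu.2 hwz⟩)
  have hz' : z ∈ F ∩ Iic w := heq ⟨hzF, le_rfl⟩
  exact le_antisymm hwz hz'.2



lemma wayBelow_subset {V U : Set X} (h : WayBelowSet V U) (hUc : IsClopen U)
    (hUu : IsUpperSet U) : V ⊆ U :=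
  h U hUc.2 hUu subset_closure

lemma wayBelow_mono_left {V' V U : Set X} (hV : V' ⊆ V) (h : WayBelowSet V U) :
    WayBelowSet V' U := fun W hWo hWu hU => hV.trans (h W hWo hWu hU)

lemma wayBelow_mono_right {V U U' : Set X} (hU : U ⊆ U') (h : WayBelowSet V U) :
    WayBelowSet V U' := fun W hWo hWu hU' => h W hWo hWu (hU.trans hU')

lemma mem_kernel {U : Set X} {z : X} :
    z ∈ kernelSet U ↔ ∃ V : Set X, IsClopen V ∧ IsUpperSet V ∧ WayBelowSet V U ∧ z ∈ V := by
  constructor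
  · rintro ⟨V, ⟨h1, h2, h3⟩, hz⟩; exact ⟨V, h1, h2, h3, hz⟩
  · rintro ⟨V, h1, h2, h3, hz⟩; exact ⟨V, ⟨h1, h2, h3⟩, hz⟩

lemma kernel_subset {U : Set X} (hUc : IsClopen U) (hUu : IsUpperSet U) :
    kernelSet U ⊆ U := by
  rintro z hz
  obtain ⟨V, _, _, h3, hz⟩ := mem_kernel.1 hz
  exact wayBelow_subset h3 hUc hUu hz

lemma kernel_isOpen (U : Set X) : IsOpen (kernelSet U) :=
  isOpen_sUnion fun V hV => hV.1.2

lemma kernel_upper (U : Set X) : IsUpperSet (kernelSet U) := by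
  rintro a b hab ⟨V, hV, ha⟩
  exact ⟨V, hV, hV.2.1 hab ha⟩

lemma kernel_mono {U U' : Set X} (h : U ⊆ U') : kernelSet U ⊆ kernelSet U' := by
  rintro z ⟨V, hV, hz⟩
  exact ⟨V, ⟨hV.1, hV.2.1, wayBelow_mono_right h hV.2.2⟩, hz⟩

lemma subset_kernel_of_wayBelow {V U : Set X} (hVc : IsClopen V) (hVu : IsUpperSet V)
    (h : WayBelowSet V U) : V ⊆ kernelSet U := fun z hz => ⟨V, ⟨hVc, hVu, h⟩, hz⟩

lemma wayBelow_of_subset_kernel {V U : Set X} (h : V ⊆ kernelSet U) : WayBelowSet V U := by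
  intro W hWo hWu hU z hz
  obtain ⟨A, _, _, hA, hzA⟩ := mem_kernel.1 (h hz)
  exact hA W hWo hWu hU hzA

lemma upperClosure_localic_subset_kernel (hX : IsCLSpace X) {U : Set X}
    (hUc : IsClopen U) (hUu : IsUpperSet U) :
    (upperClosure (U ∩ localicPart X) : Set X) ⊆ kernelSet U := by
  rintro z hz
  obtain ⟨y, ⟨hyU, hyY⟩, hyz⟩ := mem_upperClosure.1 hz
  have hy : y ∈ kernelSet U :=
    localic_mem_of_mem_closure hyY (kernel_upper U) (hX.2 U hUc hUu hyU)
  exact kernel_upper U hyz hy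

lemma compact_subset_kernel (hX : IsLSpace X) {V U : Set X} (hVc : IsClopen V)
    (h : V ⊆ kernelSet U) :
    ∃ V' : Set X, IsClopen V' ∧ IsUpperSet V' ∧ V ⊆ V' ∧ WayBelowSet V' U := by
  haveI := hX.compact
  set T := {A : Set X // IsClopen A ∧ IsUpperSet A ∧ WayBelowSet A U} with hT
  have hcov : V ⊆ ⋃ A : T, (A : Set X) := by
    intro z hz
    obtain ⟨A, h1, h2, h3, hzA⟩ := mem_kernel.1 (h hz)
    exact mem_iUnion.2 ⟨⟨A, h1, h2, h3⟩, hzA⟩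
  obtain ⟨t, ht⟩ := (hVc.1.isCompact).elim_finite_subcover (fun A : T => (A : Set X))
    (fun A => A.2.1.2) hcov
  refine ⟨⋃ A ∈ t, (A : Set X), ?_, ?_, ht, ?_⟩
  · exact t.finite_toSet.isClopen_biUnion fun A _ => A.2.1
  · exact isUpperSet_iUnion₂ fun A _ => A.2.2.1
  · intro W hWo hWu hU
    exact iUnion₂_subset fun A _ => A.2.2.2 W hWo hWu hU

lemma interpolation (hX : IsCLSpace X) {U V : Set X} (hUc : IsClopen U) (hUu : IsUpperSet U)
    (hVc : IsClopen V) (h : WayBelowSet V U) :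
    ∃ B : Set X, IsClopen B ∧ IsUpperSet B ∧ V ⊆ B ∧ WayBelowSet V B ∧ WayBelowSet B U := by
  haveI := hX.1.compact
  set T := {A : Set X // IsClopen A ∧ IsUpperSet A ∧ WayBelowSet A U} with hT
  set D := ⋃ A : T, kernelSet (A : Set X) with hD
  have hDo : IsOpen D := isOpen_iUnion fun A => kernel_isOpen _
  have hDu : IsUpperSet D := isUpperSet_iUnion fun A => kernel_upper _
  have h1 : kernelSet U ⊆ closure D := by
    rintro z hz
    obtain ⟨A, ha1, ha2, ha3, hzA⟩ := mem_kernel.1 hz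
    have hz' : z ∈ closure (kernelSet A) := hX.2 A ha1 ha2 hzA
    exact closure_mono (subset_iUnion (fun A : T => kernelSet (A : Set X)) ⟨A, ha1, ha2, ha3⟩) hz'
  have hUD : U ⊆ closure D := by
    refine (hX.2 U hUc hUu).trans ?_
    calc closure (kernelSet U) ⊆ closure (closure D) := closure_mono h1
      _ = closure D := closure_closure
  have hVD : V ⊆ D := h D hDo hDu hUD
  obtain ⟨t, ht⟩ := (hVc.1.isCompact).elim_finite_subcover
    (fun A : T => kernelSet (A : Set X)) (fun A => kernel_isOpen _) hVD
  set B := ⋃ A ∈ t, (A : Set X) with hB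
  have hBc : IsClopen B := t.finite_toSet.isClopen_biUnion fun A _ => A.2.1
  have hBu : IsUpperSet B := isUpperSet_iUnion₂ fun A _ => A.2.2.1
  have hVkB : V ⊆ kernelSet B := by
    intro z hz
    obtain ⟨A, hAt, hzA⟩ := mem_iUnion₂.1 (ht hz)
    exact kernel_mono (subset_iUnion₂ (s := fun (A : T) (_ : A ∈ t) => (A : Set X)) A hAt) hzA
  exact ⟨B, hBc, hBu, (hVkB.trans (kernel_subset hBc hBu)),
    wayBelow_of_subset_kernel hVkB,
    fun W hWo hWu hU => iUnion₂_subset fun A _ => A.2.2.2 W hWo hWu hU⟩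

lemma hm_aux (hX : IsLSpace X) (G : Set (Set X))
    (hmem : ∀ A ∈ G, IsClopen A ∧ IsUpperSet A)
    (hup : ∀ A ∈ G, ∀ B, IsClopen B → IsUpperSet B → A ⊆ B → B ∈ G)
    (hint : ∀ A ∈ G, ∀ B ∈ G, A ∩ B ∈ G)
    (hscott : ∀ 𝒲 : Set (Set X), 𝒲.Nonempty → (∀ W ∈ 𝒲, IsClopen W ∧ IsUpperSet W) →
      (∀ W₁ ∈ 𝒲, ∀ W₂ ∈ 𝒲, ∃ W₃ ∈ 𝒲, W₁ ∪ W₂ ⊆ W₃) → closure (⋃₀ 𝒲) ∈ G →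
      ∃ W ∈ 𝒲, W ∈ G)
    (C : Set X) (hCc : IsClopen C) (hCu : IsUpperSet C) :
    G ⊆ {A : Set X | IsClopen A ∧ IsUpperSet A ∧ A ∪ C ∈ G} ∧
    (∀ A ∈ {A : Set X | IsClopen A ∧ IsUpperSet A ∧ A ∪ C ∈ G}, ∀ B : Set X,
      IsClopen B → IsUpperSet B → A ⊆ B →
      B ∈ {A : Set X | IsClopen A ∧ IsUpperSet A ∧ A ∪ C ∈ G}) ∧
    (∀ A ∈ {A : Set X | IsClopen A ∧ IsUpperSet A ∧ A ∪ C ∈ G},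
      ∀ B ∈ {A : Set X | IsClopen A ∧ IsUpperSet A ∧ A ∪ C ∈ G},
      A ∩ B ∈ {A : Set X | IsClopen A ∧ IsUpperSet A ∧ A ∪ C ∈ G}) ∧
    (∀ 𝒲 : Set (Set X), 𝒲.Nonempty → (∀ W ∈ 𝒲, IsClopen W ∧ IsUpperSet W) →
      (∀ W₁ ∈ 𝒲, ∀ W₂ ∈ 𝒲, ∃ W₃ ∈ 𝒲, W₁ ∪ W₂ ⊆ W₃) →
      closure (⋃₀ 𝒲) ∈ {A : Set X | IsClopen A ∧ IsUpperSet A ∧ A ∪ C ∈ G} →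
      ∃ W ∈ 𝒲, W ∈ {A : Set X | IsClopen A ∧ IsUpperSet A ∧ A ∪ C ∈ G}) := by
  refine ⟨?_, ?_, ?_, ?_⟩
  · intro A hA
    refine ⟨(hmem A hA).1, (hmem A hA).2, ?_⟩
    exact hup A hA (A ∪ C) ((hmem A hA).1.union hCc) ((hmem A hA).2.union hCu)
      subset_union_left
  · rintro A ⟨hAc, hAu, hACG⟩ B hBc hBu hAB
    exact ⟨hBc, hBu, hup _ hACG (B ∪ C) (hBc.union hCc) (hBu.union hCu)
      (union_subset_union_left C hAB)⟩
  · rintro A ⟨hAc, hAu, hACG⟩ B ⟨hBc, hBu, hBCG⟩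
    refine ⟨hAc.inter hBc, hAu.inter hBu, ?_⟩
    have heq : (A ∩ B) ∪ C = (A ∪ C) ∩ (B ∪ C) := by
      ext z; simp only [mem_union, mem_inter_iff]; tauto
    rw [heq]
    exact hint _ hACG _ hBCG
  · rintro 𝒲 hne hprops hdir ⟨_, _, hU⟩
    set 𝒲' := (fun W => W ∪ C) '' 𝒲 with h𝒲'
    have hsU' : ⋃₀ 𝒲' = ⋃₀ 𝒲 ∪ C := by
      apply subset_antisymm
      · rintro z ⟨_, ⟨W, hW, rfl⟩, hz⟩
        rcases hz with hz | hz
        · exact Or.inl ⟨W, hW, hz⟩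
        · exact Or.inr hz
      · rintro z (⟨W, hW, hz⟩ | hz)
        · exact ⟨W ∪ C, ⟨W, hW, rfl⟩, Or.inl hz⟩
        · obtain ⟨W, hW⟩ := hne
          exact ⟨W ∪ C, ⟨W, hW, rfl⟩, Or.inr hz⟩
    have hWo : IsOpen (⋃₀ 𝒲 ∪ C) :=
      (isOpen_sUnion fun W hW => (hprops W hW).1.2).union hCc.2
    have hWu : IsUpperSet (⋃₀ 𝒲 ∪ C) :=
      (isUpperSet_sUnion fun W hW => (hprops W hW).2).union hCu
    have hclG : closure (⋃₀ 𝒲') ∈ G := by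
      rw [hsU']
      refine hup _ hU (closure (⋃₀ 𝒲 ∪ C)) ⟨isClosed_closure, hX.eod _ hWo hWu⟩
        (isUpperSet_closure hX hWu) ?_
      exact union_subset (closure_mono subset_union_left)
        (subset_union_right.trans subset_closure)
    obtain ⟨W', hW'mem, hW'G⟩ := hscott 𝒲' (hne.image _)
      (by rintro _ ⟨W, hW, rfl⟩; exact ⟨(hprops W hW).1.union hCc, (hprops W hW).2.union hCu⟩)
      (by
        rintro _ ⟨W₁, h₁, rfl⟩ _ ⟨W₂, h₂, rfl⟩
        obtain ⟨W₃, h₃, hsub⟩ := hdir W₁ h₁ W₂ h₂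
        refine ⟨W₃ ∪ C, ⟨W₃, h₃, rfl⟩, ?_⟩
        rintro z ((hz | hz) | (hz | hz))
        · exact Or.inl (hsub (Or.inl hz))
        · exact Or.inr hz
        · exact Or.inl (hsub (Or.inr hz))
        · exact Or.inr hz)
      hclG
    obtain ⟨W, hW, rfl⟩ := hW'mem
    exact ⟨W, hW, (hprops W hW).1, (hprops W hW).2, hW'G⟩

lemma hm_core (hX : IsLSpace X) (x : X) (G₀ : Set (Set X)) (hne : G₀.Nonempty)
    (h₀mem : ∀ A ∈ G₀, IsClopen A ∧ IsUpperSet A ∧ x ∈ A)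
    (h₀up : ∀ A ∈ G₀, ∀ B, IsClopen B → IsUpperSet B → A ⊆ B → B ∈ G₀)
    (h₀int : ∀ A ∈ G₀, ∀ B ∈ G₀, A ∩ B ∈ G₀)
    (h₀scott : ∀ 𝒲 : Set (Set X), 𝒲.Nonempty → (∀ W ∈ 𝒲, IsClopen W ∧ IsUpperSet W) →
      (∀ W₁ ∈ 𝒲, ∀ W₂ ∈ 𝒲, ∃ W₃ ∈ 𝒲, W₁ ∪ W₂ ⊆ W₃) → closure (⋃₀ 𝒲) ∈ G₀ →
      ∃ W ∈ 𝒲, W ∈ G₀) :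
    ∃ y : X, y ≤ x ∧ IsClopen (Iic y) ∧ ∀ A ∈ G₀, y ∈ A := by
  haveI := hX.compact
  classical
  set P : Set (Set (Set X)) := {G | G₀ ⊆ G ∧ (∀ A ∈ G, IsClopen A ∧ IsUpperSet A ∧ x ∈ A) ∧
    (∀ A ∈ G, ∀ B : Set X, IsClopen B → IsUpperSet B → A ⊆ B → B ∈ G) ∧
    (∀ A ∈ G, ∀ B ∈ G, A ∩ B ∈ G) ∧
    (∀ 𝒲 : Set (Set X), 𝒲.Nonempty → (∀ W ∈ 𝒲, IsClopen W ∧ IsUpperSet W) →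
      (∀ W₁ ∈ 𝒲, ∀ W₂ ∈ 𝒲, ∃ W₃ ∈ 𝒲, W₁ ∪ W₂ ⊆ W₃) → closure (⋃₀ 𝒲) ∈ G →
      ∃ W ∈ 𝒲, W ∈ G)} with hP
  have hzorn : ∀ c ⊆ P, IsChain (· ⊆ ·) c → c.Nonempty → ∃ ub ∈ P, ∀ s ∈ c, s ⊆ ub := by
    rintro c hcP hchain ⟨c₀, hc₀⟩
    refine ⟨⋃₀ c, ⟨?_, ?_, ?_, ?_, ?_⟩, fun s hs => subset_sUnion_of_mem hs⟩
    · exact ((hcP hc₀).1).trans (subset_sUnion_of_mem hc₀)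
    · rintro A ⟨G, hG, hA⟩
      exact (hcP hG).2.1 A hA
    · rintro A ⟨G, hG, hA⟩ B hBc hBu hAB
      exact ⟨G, hG, (hcP hG).2.2.1 A hA B hBc hBu hAB⟩
    · rintro A ⟨G₁, hG₁, hA⟩ B ⟨G₂, hG₂, hB⟩
      rcases hchain.total hG₁ hG₂ with h | h
      · exact ⟨G₂, hG₂, (hcP hG₂).2.2.2.1 A (h hA) B hB⟩
      · exact ⟨G₁, hG₁, (hcP hG₁).2.2.2.1 A hA B (h hB)⟩
    · rintro 𝒲 h1 h2 h3 ⟨G, hG, hU⟩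
      obtain ⟨W, hW, hWG⟩ := (hcP hG).2.2.2.2 𝒲 h1 h2 h3 hU
      exact ⟨W, hW, G, hG, hWG⟩
  obtain ⟨G, hsubG, hGmax⟩ := zorn_subset_nonempty P hzorn G₀
    ⟨subset_rfl, h₀mem, h₀up, h₀int, h₀scott⟩
  obtain ⟨hG₀G, hGmem, hGup, hGint, hGscott⟩ := hGmax.1
  have hGmem2 : ∀ A ∈ G, IsClopen A ∧ IsUpperSet A :=
    fun A hA => ⟨(hGmem A hA).1, (hGmem A hA).2.1⟩
  -- primality
  have hprime : ∀ B C : Set X, IsClopen B → IsUpperSet B → IsClopen C → IsUpperSet C →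
      B ∪ C ∈ G → B ∈ G ∨ C ∈ G := by
    intro B C hBc hBu hCc hCu hBCG
    by_contra hcon
    push_neg at hcon
    obtain ⟨hBG, hCG⟩ := hcon
    obtain ⟨hsub1, hup1, hint1, hscott1⟩ := hm_aux hX G hGmem2 hGup hGint hGscott C hCc hCu
    have hxfail : ¬ ∀ A ∈ {A : Set X | IsClopen A ∧ IsUpperSet A ∧ A ∪ C ∈ G},
        IsClopen A ∧ IsUpperSet A ∧ x ∈ A := by
      intro hall
      have hG₁P : {A : Set X | IsClopen A ∧ IsUpperSet A ∧ A ∪ C ∈ G} ∈ P :=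
        ⟨hG₀G.trans hsub1, hall, hup1, hint1, hscott1⟩
      have hGG₁ := hGmax.2 hG₁P hsub1
      exact hBG (hGG₁ ⟨hBc, hBu, hBCG⟩)
    obtain ⟨a₁, ha₁⟩ := not_forall.1 hxfail
    obtain ⟨ha₁G₁, ha₁n⟩ := _root_.not_imp.1 ha₁
    have hxa₁ : x ∉ a₁ := fun hx => ha₁n ⟨ha₁G₁.1, ha₁G₁.2.1, hx⟩
    obtain ⟨hsub2, hup2, hint2, hscott2⟩ :=
      hm_aux hX G hGmem2 hGup hGint hGscott a₁ ha₁G₁.1 ha₁G₁.2.1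
    have hCG₂ : C ∈ {A : Set X | IsClopen A ∧ IsUpperSet A ∧ A ∪ a₁ ∈ G} :=
      ⟨hCc, hCu, by rw [union_comm]; exact ha₁G₁.2.2⟩
    have hxfail2 : ¬ ∀ A ∈ {A : Set X | IsClopen A ∧ IsUpperSet A ∧ A ∪ a₁ ∈ G},
        IsClopen A ∧ IsUpperSet A ∧ x ∈ A := by
      intro hall
      have hG₂P : {A : Set X | IsClopen A ∧ IsUpperSet A ∧ A ∪ a₁ ∈ G} ∈ P :=
        ⟨hG₀G.trans hsub2, hall, hup2, hint2, hscott2⟩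
      have hGG₂ := hGmax.2 hG₂P hsub2
      exact hCG (hGG₂ hCG₂)
    obtain ⟨a₂, ha₂⟩ := not_forall.1 hxfail2
    obtain ⟨ha₂G₂, ha₂n⟩ := _root_.not_imp.1 ha₂
    have hxa₂ : x ∉ a₂ := fun hx => ha₂n ⟨ha₂G₂.1, ha₂G₂.2.1, hx⟩
    rcases (hGmem _ ha₂G₂.2.2).2.2 with h | h
    · exact hxa₂ h
    · exact hxa₁ h
  -- existence of the point
  have hex : ∃ y : X, (∀ A ∈ G, y ∈ A) ∧
      (∀ B : Set X, IsClopen B → IsUpperSet B → y ∈ B → B ∈ G) := by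
    by_contra hcon
    push_neg at hcon
    set g : Set X → Set X := fun A =>
      if A ∈ G then Aᶜ else if IsClopen A ∧ IsUpperSet A then A else ∅ with hg
    have hgo : ∀ A, IsOpen (g A) := by
      intro A
      by_cases h1 : A ∈ G
      · simpa [hg, h1] using (hGmem A h1).1.1.isOpen_compl
      · by_cases h2 : IsClopen A ∧ IsUpperSet A
        · simpa [hg, h1, h2] using h2.1.2
        · simp [hg, h1, h2]
    have hcov : (univ : Set X) ⊆ ⋃ A, g A := by
      intro z _
      rcases em (∀ A ∈ G, z ∈ A) with hz | hz
      · obtain ⟨B, hB1, hB2, hB3, hB4⟩ := hcon z hz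
        refine mem_iUnion.2 ⟨B, ?_⟩
        simp only [hg]
        rw [if_neg hB4, if_pos ⟨hB1, hB2⟩]
        exact hB3
      · push_neg at hz
        obtain ⟨A, hA, hzA⟩ := hz
        refine mem_iUnion.2 ⟨A, ?_⟩
        simp only [hg]
        rw [if_pos hA]
        exact hzA
    obtain ⟨t, ht⟩ := isCompact_univ.elim_finite_subcover g hgo hcov
    have hA0 : ∀ s : Finset (Set X), ∃ A₀ ∈ G, ∀ A ∈ s, A ∈ G → A₀ ⊆ A := by
      intro s
      induction s using Finset.induction_on with
      | empty =>
        obtain ⟨A₀, hA₀⟩ := hne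
        exact ⟨A₀, hG₀G hA₀, by simp⟩
      | @insert B s hBs ih =>
        obtain ⟨A₀, hA₀, hall⟩ := ih
        by_cases hB : B ∈ G
        · refine ⟨A₀ ∩ B, hGint _ hA₀ _ hB, fun A hA hAG => ?_⟩
          rcases Finset.mem_insert.1 hA with rfl | hA
          · exact inter_subset_right
          · exact inter_subset_left.trans (hall A hA hAG)
        · refine ⟨A₀, hA₀, fun A hA hAG => ?_⟩
          rcases Finset.mem_insert.1 hA with rfl | hA
          · exact absurd hAG hB
          · exact hall A hA hAG
    have hB0 : ∀ s : Finset (Set X), ∃ B₀ : Set X, IsClopen B₀ ∧ IsUpperSet B₀ ∧ B₀ ∉ G ∧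
        ∀ B ∈ s, (IsClopen B ∧ IsUpperSet B ∧ B ∉ G) → B ⊆ B₀ := by
      intro s
      induction s using Finset.induction_on with
      | empty =>
        exact ⟨∅, isClopen_empty, isUpperSet_empty,
          fun h => (hGmem ∅ h).2.2, by simp⟩
      | @insert B s hBs ih =>
        obtain ⟨B₀, hB₀c, hB₀u, hB₀G, hall⟩ := ih
        by_cases hB : IsClopen B ∧ IsUpperSet B ∧ B ∉ G
        · refine ⟨B₀ ∪ B, hB₀c.union hB.1, hB₀u.union hB.2.1, ?_, fun B' hB' hprops => ?_⟩
          · intro h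
            rcases hprime B₀ B hB₀c hB₀u hB.1 hB.2.1 h with h' | h'
            · exact hB₀G h'
            · exact hB.2.2 h'
          · rcases Finset.mem_insert.1 hB' with rfl | hB'
            · exact subset_union_right
            · exact (hall B' hB' hprops).trans subset_union_left
        · refine ⟨B₀, hB₀c, hB₀u, hB₀G, fun B' hB' hprops => ?_⟩
          rcases Finset.mem_insert.1 hB' with rfl | hB'
          · exact absurd hprops hB
          · exact hall B' hB' hprops
    obtain ⟨A₀, hA₀G, hA₀all⟩ := hA0 t
    obtain ⟨B₀, hB₀c, hB₀u, hB₀G, hB₀all⟩ := hB0 t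
    have hsub : A₀ ⊆ B₀ := by
      intro u hu
      obtain ⟨A, hAt, huA⟩ := mem_iUnion₂.1 (ht (mem_univ u))
      by_cases hAG : A ∈ G
      · rw [hg] at huA
        simp only [if_pos hAG] at huA
        exact absurd (hA₀all A hAt hAG hu) huA
      · by_cases h2 : IsClopen A ∧ IsUpperSet A
        · rw [hg] at huA
          simp only [if_neg hAG, if_pos h2] at huA
          exact hB₀all A hAt ⟨h2.1, h2.2, hAG⟩ huA
        · rw [hg] at huA
          simp only [if_neg hAG, if_neg h2] at huA
          exact absurd huA (notMem_empty u)
    exact hB₀G (hGup A₀ hA₀G B₀ hB₀c hB₀u hsub)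
  obtain ⟨y, hy1, hy2⟩ := hex
  refine ⟨y, ?_, ?_, fun A hA => hy1 A (hG₀G hA)⟩
  · by_contra hyx
    obtain ⟨U, hUc, hUu, hyU, hxU⟩ := hX.priestley y x hyx
    exact hxU ((hGmem U (hy2 U hUc hUu hyU)).2.2)
  · refine localic_of_forall hX fun W hWo hWu hyW => ?_
    have hclW : closure W ∈ G :=
      hy2 _ ⟨isClosed_closure, hX.eod W hWo hWu⟩ (isUpperSet_closure hX hWu) hyW
    obtain ⟨A, hA𝒲, hAG⟩ := hGscott {A : Set X | IsClopen A ∧ IsUpperSet A ∧ A ⊆ W}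
      ⟨∅, isClopen_empty, isUpperSet_empty, empty_subset _⟩
      (fun A hA => ⟨hA.1, hA.2.1⟩)
      (fun W₁ h₁ W₂ h₂ => ⟨W₁ ∪ W₂, ⟨h₁.1.union h₂.1, h₁.2.1.union h₂.2.1,
        union_subset h₁.2.2 h₂.2.2⟩, subset_rfl⟩)
      (by
        have hsW : ⋃₀ {A : Set X | IsClopen A ∧ IsUpperSet A ∧ A ⊆ W} = W := by
          apply subset_antisymm (sUnion_subset fun A hA => hA.2.2)
          intro z hz
          obtain ⟨A, h1, h2, h3, h4⟩ := exists_clopen_upper_between hX hWo hWu hz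
          exact ⟨A, ⟨h1, h2, h4⟩, h3⟩
        rw [hsW]; exact hclW)
    exact hA𝒲.2.2 (hy1 A hAG)

lemma exists_localic_below (hX : IsCLSpace X) {U V : Set X} (hUc : IsClopen U)
    (hUu : IsUpperSet U) (hVc : IsClopen V) (hVU : WayBelowSet V U) {x : X} (hx : x ∈ V) :
    ∃ y : X, y ≤ x ∧ IsClopen (Iic y) ∧ y ∈ U := by
  haveI := hX.1.compact
  have hstep : ∀ A : {A : Set X // IsClopen A ∧ IsUpperSet A ∧ WayBelowSet V A},
      ∃ B : {A : Set X // IsClopen A ∧ IsUpperSet A ∧ WayBelowSet V A},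
        WayBelowSet (B : Set X) (A : Set X) := by
    rintro ⟨A, hAc, hAu, hVA⟩
    obtain ⟨B, h1, h2, _, h4, h5⟩ := interpolation hX hAc hAu hVc hVA
    exact ⟨⟨B, h1, h2, h4⟩, h5⟩
  choose nxt hnxt using hstep
  set s : ℕ → {A : Set X // IsClopen A ∧ IsUpperSet A ∧ WayBelowSet V A} :=
    fun n => nxt^[n] ⟨U, hUc, hUu, hVU⟩ with hs
  have hs0 : (s 0 : Set X) = U := rfl
  have hssucc : ∀ n, s (n + 1) = nxt (s n) := fun n => Function.iterate_succ_apply' nxt n _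
  have hchain : ∀ n, WayBelowSet (s (n + 1) : Set X) (s n : Set X) := by
    intro n; rw [hssucc]; exact hnxt (s n)
  have hVsub : ∀ n, V ⊆ (s n : Set X) :=
    fun n => wayBelow_subset (s n).2.2.2 (s n).2.1 (s n).2.2.1
  have hmono : ∀ n k, (s (n + k) : Set X) ⊆ (s n : Set X) := by
    intro n k
    induction k with
    | zero => exact subset_rfl
    | succ k ih =>
      exact (wayBelow_subset (hchain (n + k)) (s (n + k)).2.1 (s (n + k)).2.2.1).trans ih
  have hmono' : ∀ {m n : ℕ}, m ≤ n → (s n : Set X) ⊆ (s m : Set X) := by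
    intro m n h
    obtain ⟨k, rfl⟩ := Nat.exists_eq_add_of_le h
    exact hmono m k
  obtain ⟨y, hyx, hyIic, hyall⟩ := hm_core hX.1 x
    {A : Set X | IsClopen A ∧ IsUpperSet A ∧ ∃ n, (s n : Set X) ⊆ A}
    ⟨U, hUc, hUu, 0, hs0 ▸ subset_rfl⟩
    (fun A hA => ⟨hA.1, hA.2.1, by
      obtain ⟨n, hn⟩ := hA.2.2
      exact hn (hVsub n hx)⟩)
    (by rintro A ⟨_, _, n, hn⟩ B hBc hBu hAB; exact ⟨hBc, hBu, n, hn.trans hAB⟩)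
    (by
      rintro A ⟨hAc, hAu, n, hn⟩ B ⟨hBc, hBu, m, hm⟩
      exact ⟨hAc.inter hBc, hAu.inter hBu, max n m,
        subset_inter ((hmono' (le_max_left n m)).trans hn)
          ((hmono' (le_max_right n m)).trans hm)⟩)
    (by
      rintro 𝒲 hne𝒲 hprops hdir ⟨_, _, n, hn⟩
      have hWo : IsOpen (⋃₀ 𝒲) := isOpen_sUnion fun W hW => (hprops W hW).1.2
      have hWu : IsUpperSet (⋃₀ 𝒲) := isUpperSet_sUnion fun W hW => (hprops W hW).2
      have h1 : (s (n + 1) : Set X) ⊆ ⋃₀ 𝒲 := hchain n _ hWo hWu hn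
      haveI : Nonempty ↥𝒲 := hne𝒲.to_subtype
      obtain ⟨⟨W, hW⟩, hsubW⟩ := ((s (n + 1)).2.1.1.isCompact).elim_directed_cover
        (fun i : ↥𝒲 => (i : Set X)) (fun i => (hprops _ i.2).1.2)
        (by rwa [← sUnion_eq_iUnion])
        (by
          rintro i j
          obtain ⟨W₃, h₃, hsub₃⟩ := hdir i.1 i.2 j.1 j.2
          exact ⟨⟨W₃, h₃⟩, fun z hz => hsub₃ (Or.inl hz), fun z hz => hsub₃ (Or.inr hz)⟩)
      exact ⟨W, hW, (hprops W hW).1, (hprops W hW).2, n + 1, hsubW⟩)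
  exact ⟨y, hyx, hyIic, hyall U ⟨hUc, hUu, 0, hs0 ▸ subset_rfl⟩⟩

lemma kernel_eq (hX : IsCLSpace X) {U : Set X} (hUc : IsClopen U) (hUu : IsUpperSet U) :
    kernelSet U = (upperClosure (U ∩ localicPart X) : Set X) := by
  apply subset_antisymm
  · rintro z hz
    obtain ⟨V, h1, h2, h3, hzV⟩ := mem_kernel.1 hz
    obtain ⟨y, hyz, hyIic, hyU⟩ := exists_localic_below hX hUc hUu h1 h3 hzV
    exact mem_upperClosure.2 ⟨y, ⟨hyU, hyIic⟩, hyz⟩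
  · exact upperClosure_localic_subset_kernel hX hUc hUu

lemma localic_map {X₂ : Type*} [TopologicalSpace X₂] [PartialOrder X₂]
    (hX₁ : IsLSpace X) (hX₂ : IsLSpace X₂) {f : X → X₂} (hf : IsLMorphism f) {x : X}
    (hx : x ∈ localicPart X) : f x ∈ localicPart X₂ := by
  obtain ⟨hfc, hfm, hfcl⟩ := hf
  set W : Set X₂ := (Iic (f x))ᶜ with hW
  have hWo : IsOpen W := (closed_Iic hX₂ _).isOpen_compl
  have hWu : IsUpperSet W := IsLowerSet.compl (isLowerSet_Iic _)
  have hnc : f x ∉ closure W := by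
    intro hc
    have h1 : x ∈ f ⁻¹' closure W := hc
    rw [hfcl W hWo hWu] at h1
    have hxW : x ∈ f ⁻¹' W :=
      localic_mem_of_mem_closure hx (hWu.preimage hfm) h1
    exact hxW (le_refl (f x))
  have hIic : Iic (f x) = (lowerClosure ((closure W)ᶜ) : Set X₂) := by
    apply subset_antisymm
    · exact fun z hz => ⟨f x, hnc, hz⟩
    · rintro z ⟨o, ho, hzo⟩
      have ho' : o ∈ Iic (f x) := by
        by_contra h
        exact ho (subset_closure h)
      exact le_trans hzo ho'
  exact ⟨closed_Iic hX₂ _, by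
    rw [hIic]; exact open_lowerClosure hX₂ isClosed_closure.isOpen_compl⟩

section Morphism

variable {X₁ X₂ : Type*} [TopologicalSpace X₁] [PartialOrder X₁]
  [TopologicalSpace X₂] [PartialOrder X₂]

lemma imp_1_3 (hX₁ : IsCLSpace X₁) (hX₂ : IsCLSpace X₂) {f : X₁ → X₂}
    (hp : IsProperLMorphism f) :
    ∀ y : X₂, y ∈ localicPart X₂ → IsScottUpset (f ⁻¹' Set.Ici y) := by
  haveI := hX₁.1.compact
  intro y hy
  obtain ⟨⟨hfc, hfm, hfcl⟩, hker⟩ := hp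
  refine ⟨(closed_Ici hX₂.1 y).preimage hfc, (isUpperSet_Ici y).preimage hfm, ?_⟩
  intro x hxF hmin
  have hyker : ∀ U : Set X₂, IsClopen U → IsUpperSet U → y ∈ U → y ∈ kernelSet U :=
    fun U h1 h2 h3 =>
      upperClosure_localic_subset_kernel hX₂ h1 h2 (mem_upperClosure.2 ⟨y, ⟨h3, hy⟩, le_rfl⟩)
  obtain ⟨y', hy'x, hy'Iic, hy'all⟩ := hm_core hX₁.1 x
    {A : Set X₁ | IsClopen A ∧ IsUpperSet A ∧
      ∃ U : Set X₂, IsClopen U ∧ IsUpperSet U ∧ y ∈ U ∧ f ⁻¹' kernelSet U ⊆ A}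
    ⟨univ, isClopen_univ, isUpperSet_univ, univ, isClopen_univ, isUpperSet_univ,
      mem_univ y, subset_univ _⟩
    (by
      rintro A ⟨hAc, hAu, U, h1, h2, h3, h4⟩
      exact ⟨hAc, hAu, h4 (show f x ∈ kernelSet U from kernel_upper U hxF (hyker U h1 h2 h3))⟩)
    (by
      rintro A ⟨hAc, hAu, U, h1, h2, h3, h4⟩ B hBc hBu hAB
      exact ⟨hBc, hBu, U, h1, h2, h3, h4.trans hAB⟩)
    (by
      rintro A ⟨hAc, hAu, U₁, h11, h12, h13, h14⟩ B ⟨hBc, hBu, U₂, h21, h22, h23, h24⟩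
      refine ⟨hAc.inter hBc, hAu.inter hBu, U₁ ∩ U₂, h11.inter h21, h12.inter h22,
        ⟨h13, h23⟩, ?_⟩
      intro z hz
      exact ⟨h14 (preimage_mono (kernel_mono inter_subset_left) hz),
        h24 (preimage_mono (kernel_mono inter_subset_right) hz)⟩)
    (by
      rintro 𝒲 hne𝒲 hprops hdir ⟨_, _, U, hU1, hU2, hU3, hU4⟩
      have hWo : IsOpen (⋃₀ 𝒲) := isOpen_sUnion fun W hW => (hprops W hW).1.2
      have hWu : IsUpperSet (⋃₀ 𝒲) := isUpperSet_sUnion fun W hW => (hprops W hW).2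
      obtain ⟨V₂, hV1, hV2, hV3, hyV₂⟩ := mem_kernel.1 (hyker U hU1 hU2 hU3)
      have hstep1 : f ⁻¹' U ⊆ closure (⋃₀ 𝒲) := by
        have h1 : f ⁻¹' U ⊆ f ⁻¹' closure (kernelSet U) := preimage_mono (hX₂.2 U hU1 hU2)
        rw [hfcl _ (kernel_isOpen U) (kernel_upper U)] at h1
        refine h1.trans ?_
        calc closure (f ⁻¹' kernelSet U) ⊆ closure (closure (⋃₀ 𝒲)) := closure_mono hU4
          _ = closure (⋃₀ 𝒲) := closure_closure
      have hV₂sub : f ⁻¹' V₂ ⊆ kernelSet (f ⁻¹' U) :=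
        (preimage_mono (subset_kernel_of_wayBelow hV1 hV2 hV3)).trans (hker U hU1 hU2)
      obtain ⟨Vs, hVsc, hVsu, hVssub, hVswb⟩ :=
        compact_subset_kernel hX₁.1 (hV1.preimage hfc) hV₂sub
      have hVsW : Vs ⊆ ⋃₀ 𝒲 :=
        hVswb _ hWo hWu hstep1
      haveI : Nonempty ↥𝒲 := hne𝒲.to_subtype
      obtain ⟨⟨W, hW⟩, hsubW⟩ := (hVsc.1.isCompact).elim_directed_cover
        (fun i : ↥𝒲 => (i : Set X₁)) (fun i => (hprops _ i.2).1.2)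
        (by rwa [← sUnion_eq_iUnion])
        (by
          rintro i j
          obtain ⟨W₃, h₃, hsub₃⟩ := hdir i.1 i.2 j.1 j.2
          exact ⟨⟨W₃, h₃⟩, fun z hz => hsub₃ (Or.inl hz), fun z hz => hsub₃ (Or.inr hz)⟩)
      exact ⟨W, hW, (hprops W hW).1, (hprops W hW).2, V₂, hV1, hV2, hyV₂,
        (preimage_mono (kernel_subset hV1 hV2)).trans (hVssub.trans hsubW)⟩)
  have hy'F : y' ∈ f ⁻¹' Ici y := by
    by_contra h
    obtain ⟨U, hU1, hU2, hU3, hU4⟩ := hX₂.1.priestley y (f y') h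
    have hmemG : f ⁻¹' U ∈ {A : Set X₁ | IsClopen A ∧ IsUpperSet A ∧
        ∃ U : Set X₂, IsClopen U ∧ IsUpperSet U ∧ y ∈ U ∧ f ⁻¹' kernelSet U ⊆ A} :=
      ⟨hU1.preimage hfc, hU2.preimage hfm, U, hU1, hU2, hU3,
        preimage_mono (kernel_subset hU1 hU2)⟩
    exact hU4 (hy'all _ hmemG)
  have hxy' : y' = x := hmin y' hy'F hy'x
  rw [← hxy']
  exact hy'Iic

lemma imp_3_4 (hX₁ : IsCLSpace X₁) (hX₂ : IsCLSpace X₂) {f : X₁ → X₂}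
    (hf : IsLMorphism f)
    (h3 : ∀ y : X₂, y ∈ localicPart X₂ → IsScottUpset (f ⁻¹' Set.Ici y)) :
    ∀ F : Set X₂, IsScottUpset F → IsScottUpset (f ⁻¹' F) := by
  rintro F ⟨hFc, hFu, hFmin⟩
  refine ⟨hFc.preimage hf.1, hFu.preimage hf.2.1, ?_⟩
  intro x hxF hmin
  obtain ⟨m, hmF, hmfx, hmmin⟩ := exists_minimal_below hX₂.1 hFc hxF
  have hmY : m ∈ localicPart X₂ := hFmin m hmF hmmin
  obtain ⟨hSc, hSu, hSmin⟩ := h3 m hmY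
  have hxS : x ∈ f ⁻¹' Ici m := hmfx
  obtain ⟨x', hx'S, hx'x, hx'min⟩ := exists_minimal_below hX₁.1 hSc hxS
  have hx'Y : x' ∈ localicPart X₁ := hSmin x' hx'S hx'min
  have hx'F : x' ∈ f ⁻¹' F := hFu hx'S hmF
  have : x' = x := hmin x' hx'F hx'x
  rw [← this]
  exact hx'Y

lemma imp_4_5 (hX₁ : IsCLSpace X₁) (hX₂ : IsCLSpace X₂) {f : X₁ → X₂}
    (h4 : ∀ F : Set X₂, IsScottUpset F → IsScottUpset (f ⁻¹' F)) :
    ∀ x : X₁, Set.Iic (f x) ∩ localicPart X₂ ⊆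
      (lowerClosure (f '' (Set.Iic x ∩ localicPart X₁)) : Set X₂) := by
  rintro x z ⟨hzfx, hzY⟩
  have hScott : IsScottUpset (Ici z) := by
    refine ⟨closed_Ici hX₂.1 z, isUpperSet_Ici z, ?_⟩
    intro w hw hmin
    have : z = w := hmin z le_rfl hw
    rw [← this]; exact hzY
  obtain ⟨hSc, hSu, hSmin⟩ := h4 (Ici z) hScott
  have hxS : x ∈ f ⁻¹' Ici z := hzfx
  obtain ⟨x', hx'S, hx'x, hx'min⟩ := exists_minimal_below hX₁.1 hSc hxS
  exact mem_lowerClosure.2 ⟨f x', ⟨x', ⟨hx'x, hSmin x' hx'S hx'min⟩, rfl⟩, hx'S⟩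

lemma imp_5_2 (hX₁ : IsCLSpace X₁) (hX₂ : IsCLSpace X₂) {f : X₁ → X₂}
    (hf : IsLMorphism f)
    (h5 : ∀ x : X₁, Set.Iic (f x) ∩ localicPart X₂ ⊆
      (lowerClosure (f '' (Set.Iic x ∩ localicPart X₁)) : Set X₂)) :
    ∀ U : Set X₂, IsClopen U → IsUpperSet U →
      f ⁻¹' (upperClosure (U ∩ localicPart X₂) : Set X₂) =
        (upperClosure (f ⁻¹' U ∩ localicPart X₁) : Set X₁) := by
  intro U hUc hUu
  apply subset_antisymm
  · intro x hx
    obtain ⟨z, ⟨hzU, hzY⟩, hzfx⟩ := mem_upperClosure.1 hx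
    obtain ⟨_, ⟨x', ⟨hx'x, hx'Y⟩, rfl⟩, hzfx'⟩ := mem_lowerClosure.1 (h5 x ⟨hzfx, hzY⟩)
    exact mem_upperClosure.2 ⟨x', ⟨hUu hzfx' hzU, hx'Y⟩, hx'x⟩
  · intro x hx
    obtain ⟨x', ⟨hx'U, hx'Y⟩, hx'x⟩ := mem_upperClosure.1 hx
    exact mem_upperClosure.2 ⟨f x', ⟨hx'U, localic_map hX₁.1 hX₂.1 hf hx'Y⟩, hf.2.1 hx'x⟩

lemma imp_2_1 (hX₁ : IsCLSpace X₁) (hX₂ : IsCLSpace X₂) {f : X₁ → X₂}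
    (hf : IsLMorphism f)
    (h2 : ∀ U : Set X₂, IsClopen U → IsUpperSet U →
      f ⁻¹' (upperClosure (U ∩ localicPart X₂) : Set X₂) =
        (upperClosure (f ⁻¹' U ∩ localicPart X₁) : Set X₁)) :
    IsProperLMorphism f := by
  refine ⟨hf, fun U hUc hUu => ?_⟩
  rw [kernel_eq hX₂ hUc hUu, h2 U hUc hUu]
  exact upperClosure_localic_subset_kernel hX₁ (hUc.preimage hf.1) (hUu.preimage hf.2.1)

end Morphism

end LS

/-- Equivalent characterizations of properness for an L-morphism between
CL-spaces. -/
theorem properLMorphism_tfae {X₁ X₂ : Type*}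
    [TopologicalSpace X₁] [PartialOrder X₁] [TopologicalSpace X₂] [PartialOrder X₂]
    (hX₁ : IsCLSpace X₁) (hX₂ : IsCLSpace X₂)
    (f : X₁ → X₂) (hf : IsLMorphism f) :
    List.TFAE
      [ IsProperLMorphism f,
        ∀ U : Set X₂, IsClopen U → IsUpperSet U →
          f ⁻¹' (upperClosure (U ∩ localicPart X₂) : Set X₂) =
            (upperClosure (f ⁻¹' U ∩ localicPart X₁) : Set X₁),
        ∀ y : X₂, y ∈ localicPart X₂ → IsScottUpset (f ⁻¹' Set.Ici y),
        ∀ F : Set X₂, IsScottUpset F → IsScottUpset (f ⁻¹' F),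
        ∀ x : X₁, Set.Iic (f x) ∩ localicPart X₂ ⊆
          (lowerClosure (f '' (Set.Iic x ∩ localicPart X₁)) : Set X₂) ] := by
  tfae_have 1 → 3 := fun h => LS.imp_1_3 hX₁ hX₂ h
  tfae_have 3 → 4 := fun h => LS.imp_3_4 hX₁ hX₂ hf h
  tfae_have 4 → 5 := fun h => LS.imp_4_5 hX₁ hX₂ h
  tfae_have 5 → 2 := fun h => LS.imp_5_2 hX₁ hX₂ hf h
  tfae_have 2 → 1 := fun h => LS.imp_2_1 hX₁ hX₂ hf h
  tfae_finish
end
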